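/- arXiv:2406.06217 — 8 statements merged into one kernel-verified Lean document; each statement's English description precedes it below -/
import Mathlib

section
/- Ryser's formula: for every n and every n×n matrix A over a commutative ring R, the permanent satisfies per(A) = ∑_{I ⊆ {1,…,n}} (−1)^{|I|} ∏_{i=1}^{n} ( ∑_{j ∉ I} A_{i,j} ), where the outer sum ranges over all subsets I of the column index set. -/
open Finset Function

lemma aux_pow_sum {α : Type*} [DecidableEq α] {R : Type*} [CommRing R] (x : Finset α) :
    (∑ m ∈ x.powerset, (-1 : R) ^ m.card) = if x = ∅ then 1 else 0 := by
  have := Finset.sum_powerset_neg_one_pow_card (x := x)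
  calc (∑ m ∈ x.powerset, (-1 : R) ^ m.card)
      = ((∑ m ∈ x.powerset, (-1 : ℤ) ^ m.card : ℤ) : R) := by push_cast; ring_nf
    _ = _ := by rw [this]; split <;> simp

lemma aux_image_univ {n : ℕ} (g : Fin n → Fin n) :
    Finset.image g Finset.univ = Finset.univ ↔ Bijective g := by
  constructor
  · intro h
    have hs : Surjective g := by
      intro y
      have : y ∈ Finset.image g Finset.univ := by rw [h]; exact Finset.mem_univ y
      simpa using this
    exact hs.bijective_of_finite
  · intro h
    apply Finset.eq_univ_of_forall
    intro y
    obtain ⟨x, hx⟩ := h.2 y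
    exact Finset.mem_image.mpr ⟨x, Finset.mem_univ x, hx⟩


/-- **Ryser's formula**: for an `n × n` matrix `A` over a commutative ring `R`, the permanent
satisfies `per(A) = ∑_{I ⊆ {1,…,n}} (−1)^{|I|} ∏_{i=1}^n (∑_{j ∉ I} A i j)`, where the outer
sum ranges over all subsets `I` of the column index set. -/
theorem ryser_formula {n : ℕ} {R : Type*} [CommRing R] (A : Matrix (Fin n) (Fin n) R) :
    A.permanent = ∑ I : Finset (Fin n), (-1 : R) ^ I.card * ∏ i, ∑ j ∈ Iᶜ, A i j := by
  classical
  have key : ∀ I : Finset (Fin n),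
      (∏ i, ∑ j ∈ Iᶜ, A i j)
        = ∑ g : Fin n → Fin n, if ∀ i, g i ∈ Iᶜ then ∏ i, A i (g i) else 0 := by
    intro I
    rw [Finset.prod_univ_sum (fun _ => Iᶜ) (fun i j => A i j), ← Finset.sum_filter]
    apply Finset.sum_congr _ (fun _ _ => rfl)
    ext g
    simp [Fintype.mem_piFinset]
  calc A.permanent
      = ∑ σ : Equiv.Perm (Fin n), ∏ i, A i (σ i) := by
        rw [← Matrix.permanent_transpose]
        simp [Matrix.permanent, Matrix.transpose_apply]
    _ = ∑ g : Fin n → Fin n,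
          (if Bijective g then (1 : R) else 0) * ∏ i, A i (g i) := by
        simp only [ite_mul, one_mul, zero_mul, ← Finset.sum_filter]
        refine Finset.sum_bij' (i := fun (σ : Equiv.Perm (Fin n)) (_ : σ ∈ Finset.univ) => (σ : Fin n → Fin n))
          (j := fun g hg => Equiv.ofBijective g (by simpa using hg))
          ?_ ?_ ?_ ?_ ?_
        · intro σ _; exact Finset.mem_filter.mpr ⟨Finset.mem_univ _, σ.bijective⟩
        · intro g hg; exact Finset.mem_univ _
        · intro σ _; ext x; simp [Equiv.ofBijective]
        · intro g hg; rfl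
        · intro σ _; rfl
    _ = ∑ g : Fin n → Fin n,
          (∑ I ∈ ((Finset.image g Finset.univ)ᶜ).powerset, (-1 : R) ^ I.card)
            * ∏ i, A i (g i) := by
        apply Finset.sum_congr rfl
        intro g _
        congr 1
        rw [aux_pow_sum]
        congr 1
        rw [eq_iff_iff, Finset.compl_eq_empty_iff, aux_image_univ]
    _ = ∑ g : Fin n → Fin n, ∑ I : Finset (Fin n),
          if ∀ i, g i ∈ Iᶜ then (-1 : R) ^ I.card * ∏ i, A i (g i) else 0 := by
        apply Finset.sum_congr rfl
        intro g _
        rw [Finset.sum_mul, ← Finset.sum_filter]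
        apply Finset.sum_congr _ (fun _ _ => rfl)
        ext I
        simp only [Finset.mem_powerset, Finset.mem_filter, Finset.mem_univ, true_and,
          Finset.mem_compl]
        constructor
        · intro h i hgi
          exact (Finset.mem_compl.mp (h hgi))
            (Finset.mem_image.mpr ⟨i, Finset.mem_univ i, rfl⟩)
        · intro h x hx
          rw [Finset.mem_compl]
          intro hmem
          obtain ⟨i, -, rfl⟩ := Finset.mem_image.mp hmem
          exact h i hx
    _ = ∑ I : Finset (Fin n), (-1 : R) ^ I.card * ∏ i, ∑ j ∈ Iᶜ, A i j := by
        rw [Finset.sum_comm]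
        apply Finset.sum_congr rfl
        intro I _
        rw [key I, Finset.mul_sum]
        apply Finset.sum_congr rfl
        intro g _
        split <;> simp_all
end

section
/- Grenet's upper bound: for every n ≥ 1 there exists a square matrix A of size 2^n − 1 whose entries are affine-linear polynomials with integer coefficients in the n² variables x_{ij} (in fact each entry is a variable x_{ij} or a constant 0 or 1) such that det(A) = PER_n as multivariate polynomials over ℤ; hence the determinantal complexity of the n×n permanent is at most 2^n − 1 over every commutative ring. -/
open MvPolynomial

/-- The permanent polynomial `PER_n = ∑_{σ ∈ S_n} ∏_i x_{i,σ(i)}` in the `n²`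
variables `x_{ij}`, over ℤ. -/
noncomputable def permPolyInt (n : ℕ) : MvPolynomial (Fin n × Fin n) ℤ :=
  ∑ σ : Equiv.Perm (Fin n), ∏ i, X (i, σ i)

/-!
Let `N` be the weighted adjacency matrix of the Hasse diagram of the Boolean lattice of subsets
of `[n]`, the edge `S → S ∪ {j}` carrying the variable `x_{|S|, j}`. Paths from `∅` to `[n]` are
the permutations of `[n]`, so `N^n (∅, [n]) = PER_n`. Since `1 + N` is unitriangular and `N` is
nilpotent, `adj (1 + N) = (1 + N)⁻¹ = ∑ₖ (-N)^k`, whose `(∅, [n])` entry is `(-1)^n PER_n`.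
This adjugate entry is the determinant of `1 + N` with row `[n]` replaced by the unit vector at
`∅`. Moving column `[n]` onto `∅` and deleting row and column `[n]` leaves Grenet's matrix of
size `2^n - 1`, with entries `0`, `1` or a variable and determinant `(-1)^(n+1) PER_n`; a row
permutation of that sign corrects the sign.
-/

open Finset Matrix

section Words

variable {α R : Type*} [DecidableEq α] [CommRing R]

lemma univ_image_snoc {k : ℕ} (g : Fin k → α) (a : α) :
    univ.image (Fin.snoc g a : Fin (k + 1) → α) = insert a (univ.image g) := by
  ext x
  simp [Fin.exists_fin_succ', eq_comm, or_comm]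

lemma insert_eq_iff_of_card_le {k : ℕ} {a : α} {A T : Finset α} (hA : A.card ≤ k)
    (hT : T.card = k + 1) : insert a A = T ↔ a ∈ T ∧ A = T.erase a := by
  constructor
  · rintro rfl
    have haA : a ∉ A := fun haA => by rw [insert_eq_of_mem haA] at hT; omega
    exact ⟨mem_insert_self a A, (erase_insert haA).symm⟩
  · rintro ⟨haT, rfl⟩
    exact insert_erase haT

variable [Fintype α]

lemma sum_univ_image_eq_of_card_eq_succ {k : ℕ} (w : ℕ → α → R) {T : Finset α}
    (hT : T.card = k + 1) :
    ∑ f : Fin (k + 1) → α with univ.image f = T, ∏ i : Fin (k + 1), w i (f i) =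
      ∑ a ∈ T, (∑ g : Fin k → α with univ.image g = T.erase a, ∏ i : Fin k, w i (g i)) * w k a := by
  have hcard (g : Fin k → α) : (univ.image g).card ≤ k :=
    card_image_le.trans (by rw [card_univ, Fintype.card_fin])
  rw [sum_filter, ← (Fin.snocEquiv fun _ => α).sum_comp, Fintype.sum_prod_type]
  simp only [Fin.snocEquiv, Equiv.coe_fn_mk, univ_image_snoc,
    insert_eq_iff_of_card_le (hcard _) hT, Fin.prod_univ_castSucc, Fin.snoc_castSucc,
    Fin.snoc_last, Fin.val_castSucc, Fin.val_last, ite_and, sum_filter, sum_mul, ite_mul, zero_mul]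
  simp_rw [sum_ite_irrel, sum_const_zero, sum_ite_mem, univ_inter]

lemma sum_perm_eq_sum_univ_image_eq_univ {M : Type*} [AddCommMonoid M] (F : (α → α) → M) :
    ∑ σ : Equiv.Perm α, F σ = ∑ f : α → α with univ.image f = univ, F f := by
  refine sum_nbij (fun σ => ⇑σ) (fun σ _ => ?_) (fun σ _ τ _ h => Equiv.ext (congrFun h))
    (fun f hf => ?_) (fun _ _ => rfl)
  · simp [image_univ_equiv]
  · have hsurj : Function.Surjective f := fun x => by
      have hx : x ∈ univ.image f := by rw [(mem_filter.mp hf).2]; exact mem_univ x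
      simpa using hx
    exact ⟨Equiv.ofBijective f (Finite.surjective_iff_bijective.mp hsurj), mem_univ _, rfl⟩

end Words

namespace Grenet

variable {α R : Type*} [Fintype α] [DecidableEq α] [CommRing R]

def stepMatrix (w : ℕ → α → R) : Matrix (Finset α) (Finset α) R :=
  fun S T => ∑ j, if j ∉ S ∧ T = insert j S then w S.card j else 0

variable {w : ℕ → α → R}

lemma stepMatrix_apply_eq_zero_or (S T : Finset α) :
    stepMatrix w S T = 0 ∨ ∃ j ∉ S, T = insert j S ∧ stepMatrix w S T = w S.card j := by
  by_cases h : ∃ j ∉ S, T = insert j S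
  · obtain ⟨j, hjS, rfl⟩ := h
    refine Or.inr ⟨j, hjS, rfl, ?_⟩
    rw [stepMatrix, Fintype.sum_eq_single j fun i hij => if_neg ?_, if_pos ⟨hjS, rfl⟩]
    rintro ⟨hiS, hi⟩
    exact hij ((mem_insert.mp (hi ▸ mem_insert_self j S)).resolve_right hjS).symm
  · exact Or.inl (Fintype.sum_eq_zero _ fun j => if_neg fun hj => h ⟨j, hj⟩)

lemma stepMatrix_apply_self (S : Finset α) : stepMatrix w S S = 0 := by
  rcases stepMatrix_apply_eq_zero_or (w := w) S S with h | ⟨j, hjS, hS, -⟩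
  · exact h
  · exact absurd (hS ▸ mem_insert_self j S) hjS

lemma card_eq_of_stepMatrix_apply_ne_zero {S T : Finset α} (h : stepMatrix w S T ≠ 0) :
    T.card = S.card + 1 := by
  obtain ⟨j, hjS, rfl, -⟩ := (stepMatrix_apply_eq_zero_or S T).resolve_left h
  exact card_insert_of_notMem hjS

lemma card_eq_of_stepMatrix_pow_apply_ne_zero {k : ℕ} {S T : Finset α}
    (h : (stepMatrix w ^ k) S T ≠ 0) : T.card = S.card + k := by
  induction k generalizing T with
  | zero =>
    rw [pow_zero, one_apply] at h
    rw [(not_imp_comm.mp fun hST => if_neg hST) h, add_zero]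
  | succ k ih =>
    rw [pow_succ, mul_apply] at h
    obtain ⟨U, -, hU⟩ := exists_ne_zero_of_sum_ne_zero h
    rw [card_eq_of_stepMatrix_apply_ne_zero (right_ne_zero_of_mul hU),
      ih (left_ne_zero_of_mul hU), add_assoc]

lemma stepMatrix_pow_card_succ_eq_zero : stepMatrix w ^ (Fintype.card α + 1) = 0 := by
  ext S T
  by_contra h
  have := card_eq_of_stepMatrix_pow_apply_ne_zero h
  have := card_le_univ T
  omega

lemma blockTriangular_one_add_stepMatrix : (1 + stepMatrix w).BlockTriangular card := by
  intro S T hTS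
  rw [Matrix.add_apply, one_apply_ne (by rintro rfl; exact lt_irrefl _ hTS), zero_add]
  by_contra h
  have := card_eq_of_stepMatrix_apply_ne_zero h
  omega

lemma toSquareBlock_one_add_stepMatrix (k : ℕ) :
    (1 + stepMatrix w).toSquareBlock card k = 1 := by
  ext S T
  have hN : stepMatrix w S T = 0 := by
    by_contra h
    have := card_eq_of_stepMatrix_apply_ne_zero h
    omega
  simp [toSquareBlock_def, one_apply, hN, Subtype.ext_iff]

lemma det_one_add_stepMatrix : (1 + stepMatrix w).det = 1 := by
  rw [blockTriangular_one_add_stepMatrix.det]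
  exact prod_eq_one fun k _ => by rw [toSquareBlock_one_add_stepMatrix, det_one]

lemma adjugate_one_add_stepMatrix :
    adjugate (1 + stepMatrix w) = ∑ k ∈ range (Fintype.card α + 1), (-stepMatrix w) ^ k := by
  have hinv :
      (1 + stepMatrix w) * ∑ k ∈ range (Fintype.card α + 1), (-stepMatrix w) ^ k = 1 := by
    rw [← sub_neg_eq_add, mul_neg_geom_sum, neg_pow, stepMatrix_pow_card_succ_eq_zero, mul_zero,
      sub_zero]
  calc _ = adjugate (1 + stepMatrix w) * (1 + stepMatrix w) *
        ∑ k ∈ range (Fintype.card α + 1), (-stepMatrix w) ^ k := by rw [mul_assoc, hinv, mul_one]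
    _ = _ := by rw [adjugate_mul, det_one_add_stepMatrix, one_smul, one_mul]

lemma adjugate_one_add_stepMatrix_apply_empty_univ :
    adjugate (1 + stepMatrix w) ∅ univ =
      (-1) ^ Fintype.card α * (stepMatrix w ^ Fintype.card α) ∅ univ := by
  rw [adjugate_one_add_stepMatrix, Matrix.sum_apply, sum_eq_single (Fintype.card α)]
  · rw [← neg_one_smul R (stepMatrix w), smul_pow, Matrix.smul_apply, smul_eq_mul]
  · intro k _ hk
    rw [← neg_one_smul R (stepMatrix w), smul_pow, Matrix.smul_apply]
    by_contra h
    have := card_eq_of_stepMatrix_pow_apply_ne_zero (right_ne_zero_of_smul h)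
    simp_all
  · simp

lemma mul_stepMatrix_apply {ι : Type*} (M : Matrix ι (Finset α) R) (i : ι) (T : Finset α) :
    (M * stepMatrix w) i T = ∑ j ∈ T, M i (T.erase j) * w (T.erase j).card j := by
  have hedge (j : α) (U : Finset α) : (j ∉ U ∧ T = insert j U) ↔ (j ∈ T ∧ U = T.erase j) := by
    constructor
    · rintro ⟨hjU, rfl⟩
      exact ⟨mem_insert_self j U, (erase_insert hjU).symm⟩
    · rintro ⟨hjT, rfl⟩
      exact ⟨notMem_erase j T, (insert_erase hjT).symm⟩
  simp only [mul_apply, stepMatrix, mul_sum, mul_ite, mul_zero, hedge]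
  rw [sum_comm]
  simp [ite_and, sum_ite_eq']

lemma stepMatrix_pow_apply_empty (k : ℕ) {T : Finset α} (hT : T.card = k) :
    (stepMatrix w ^ k) ∅ T = ∑ f : Fin k → α with univ.image f = T, ∏ i : Fin k, w i (f i) := by
  induction k generalizing T with
  | zero =>
    obtain rfl := card_eq_zero.mp hT
    simp
  | succ k ih =>
    rw [pow_succ, mul_stepMatrix_apply, sum_univ_image_eq_of_card_eq_succ w hT]
    refine sum_congr rfl fun a ha => ?_
    have hcard : (T.erase a).card = k := by rw [card_erase_of_mem ha, hT, Nat.add_sub_cancel]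
    rw [ih hcard, hcard]

def grenetMatrix (w : ℕ → α → R) : Matrix {S : Finset α // S ≠ univ} {S : Finset α // S ≠ univ} R :=
  fun S T => (1 + stepMatrix w) S (Equiv.swap ∅ univ T)

lemma grenetMatrix_apply_eq_zero_or (S T : {S : Finset α // S ≠ univ}) :
    grenetMatrix w S T = 0 ∨ grenetMatrix w S T = 1 ∨ ∃ k j, grenetMatrix w S T = w k j := by
  rw [grenetMatrix, Matrix.add_apply]
  by_cases hST : S.1 = Equiv.swap ∅ univ T.1
  · rw [← hST, one_apply_eq, stepMatrix_apply_self, add_zero]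
    exact Or.inr (Or.inl rfl)
  · rw [one_apply_ne hST, zero_add]
    rcases stepMatrix_apply_eq_zero_or (w := w) S (Equiv.swap ∅ univ T) with h | ⟨j, -, -, h⟩
    · exact Or.inl h
    · exact Or.inr (Or.inr ⟨_, _, h⟩)

lemma det_grenetMatrix [Nonempty α] :
    (grenetMatrix w).det = -adjugate (1 + stepMatrix w) ∅ univ := by
  have hne : (∅ : Finset α) ≠ univ := univ_nonempty.ne_empty.symm
  set H := (1 + stepMatrix w).updateRow univ (Pi.single ∅ 1)
  have hswap : (H.submatrix id (Equiv.swap ∅ univ)).det = -H.det := by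
    rw [det_permute', Equiv.Perm.sign_swap hne]
    simp
  have hupper : toSquareBlockProp (H.submatrix id (Equiv.swap ∅ univ)) (· ≠ univ) =
      grenetMatrix w := by
    ext S T
    simp [toSquareBlockProp_def, grenetMatrix, H, updateRow_ne S.2]
  have hlower : toSquareBlockProp (H.submatrix id (Equiv.swap ∅ univ)) (¬ · ≠ univ) = 1 := by
    ext ⟨S, hS⟩ ⟨T, hT⟩
    rw [not_not] at hS hT
    subst hS hT
    simp [toSquareBlockProp_def, H]
  rw [adjugate_apply, ← hswap, twoBlockTriangular_det _ (· ≠ univ), hupper, hlower, det_one,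
    mul_one]
  rintro S hS T hT
  rw [not_not] at hS
  subst hS
  have hswapT : Equiv.swap ∅ univ T ≠ ∅ := by
    rw [Ne, Equiv.swap_apply_eq_iff, Equiv.swap_apply_left]
    exact hT
  simp [H, hswapT]

lemma card_subtype_ne_univ :
    Fintype.card {S : Finset α // S ≠ univ} = 2 ^ Fintype.card α - 1 := by
  rw [Fintype.card_subtype_compl, Fintype.card_finset, Fintype.card_subtype_eq]

/-- Only `k < n` occurs: an edge leaves `S ≠ univ` with weight index `|S|`. -/
noncomputable def permWeight (n : ℕ) : ℕ → Fin n → MvPolynomial (Fin n × Fin n) ℤ :=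
  fun k j => if h : k < n then X (⟨k, h⟩, j) else 0

lemma permWeight_eq_zero_or (n k : ℕ) (j : Fin n) :
    permWeight n k j = 0 ∨ ∃ ij, permWeight n k j = X ij := by
  unfold permWeight
  split_ifs
  exacts [Or.inr ⟨_, rfl⟩, Or.inl rfl]

lemma stepMatrix_permWeight_pow_apply_empty_univ (n : ℕ) :
    (stepMatrix (permWeight n) ^ n) ∅ univ = permPolyInt n := by
  rw [stepMatrix_pow_apply_empty n (by simp), ← sum_perm_eq_sum_univ_image_eq_univ]
  simp [permWeight, permPolyInt]

lemma det_grenetMatrix_permWeight {n : ℕ} (hn : 1 ≤ n) :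
    (grenetMatrix (permWeight n)).det = (-1) ^ (n + 1) * permPolyInt n := by
  have : Nonempty (Fin n) := ⟨⟨0, hn⟩⟩
  rw [det_grenetMatrix, adjugate_one_add_stepMatrix_apply_empty_univ, Fintype.card_fin,
    stepMatrix_permWeight_pow_apply_empty_univ]
  ring

lemma exists_perm_sign_eq_neg_one_pow {n : ℕ} (hn : 1 ≤ n) :
    ∃ τ : Equiv.Perm (Fin (2 ^ n - 1)), Equiv.Perm.sign τ = (-1) ^ (n + 1) := by
  rcases hn.eq_or_lt with rfl | hn
  · exact ⟨1, by simp⟩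
  · have : 2 ^ 2 ≤ 2 ^ n := Nat.pow_le_pow_right two_pos hn
    have : Nontrivial (Fin (2 ^ n - 1)) := Fin.nontrivial_iff_two_le.mpr (by omega)
    exact Equiv.Perm.sign_surjective _ _

end Grenet

open Grenet in
/-- **Grenet's upper bound**: for every `n ≥ 1` there is a square matrix of size `2^n − 1`,
each of whose entries is one of the variables `x_{ij}` or a constant `0` or `1` (in
particular, an affine-linear polynomial with integer coefficients), whose determinant equals
the permanent polynomial `PER_n` over ℤ. Hence the determinantal complexity of the `n × n`
permanent is at most `2^n − 1` over every commutative ring. -/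
theorem grenet_upper_bound (n : ℕ) (hn : 1 ≤ n) :
    ∃ A : Matrix (Fin (2 ^ n - 1)) (Fin (2 ^ n - 1)) (MvPolynomial (Fin n × Fin n) ℤ),
      (∀ p q, A p q = 0 ∨ A p q = 1 ∨ ∃ ij : Fin n × Fin n, A p q = X ij) ∧
      A.det = permPolyInt n := by
  let e : Fin (2 ^ n - 1) ≃ {S : Finset (Fin n) // S ≠ univ} :=
    Fintype.equivOfCardEq (by rw [card_subtype_ne_univ, Fintype.card_fin, Fintype.card_fin])
  obtain ⟨τ, hτ⟩ := exists_perm_sign_eq_neg_one_pow hn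
  refine ⟨((grenetMatrix (permWeight n)).submatrix e e).submatrix τ id, fun p q => ?_, ?_⟩
  · rcases grenetMatrix_apply_eq_zero_or (w := permWeight n) (e (τ p)) (e q) with h | h | ⟨k, j, h⟩
    · exact Or.inl h
    · exact Or.inr (Or.inl h)
    · rw [submatrix_apply, submatrix_apply, id, h]
      exact (permWeight_eq_zero_or n k j).imp_right Or.inr
  · rw [det_permute, det_submatrix_equiv_self, det_grenetMatrix_permWeight hn, hτ]
    push_cast
    rw [← mul_assoc, ← mul_pow, neg_one_mul, neg_neg, one_pow, one_mul]
end

section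
/- Szegő's theorem (answering Pólya's question): for every n ≥ 3 there is no n×n sign matrix ε, with all entries ε_{ij} ∈ {−1, +1}, such that PER_n equals the determinant of the matrix with (i,j)-entry ε_{ij}·x_{ij}, as multivariate polynomials over ℂ. -/
/-!
Comparing the coefficients of the monomial `∏ i, x_{i,σ(i)}` on both sides forces
`sign σ · ∏ i, ε_{i,σ(i)} = 1` for every permutation `σ`. Fix three indices `x, y, z`. The three
transpositions of them and the three even permutations `1, (x y)(y z), (y z)(x y)` use every entry
`ε_{ij}` with `i, j ∈ {x, y, z}` exactly once and agree elsewhere, so the products of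
`∏ i, ε_{i,σ(i)}` over the two triples coincide; yet they are `(-1)³` and `1`.
-/

open MvPolynomial Equiv

/-- The permanent polynomial `PER_n = ∑_{σ ∈ S_n} ∏_i x_{i,σ(i)}` in the `n²`
variables `x_{ij}`, over ℂ. -/
noncomputable def permPoly (n : ℕ) : MvPolynomial (Fin n × Fin n) ℂ :=
  ∑ σ : Equiv.Perm (Fin n), ∏ i, X (i, σ i)

variable {ι : Type*} [Fintype ι]

lemma prod_swaps_eq_prod_three_cycles [DecidableEq ι] {M : Type*} [CommMonoid M]
    (a : ι → ι → M) {x y z : ι} (hxy : x ≠ y) (hyz : y ≠ z) (hxz : x ≠ z) :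
    (∏ i, a i (swap x y i)) * (∏ i, a i (swap y z i)) * (∏ i, a i (swap x z i)) =
      (∏ i, a i ((swap x y * swap y z) i)) * (∏ i, a i ((swap y z * swap x y) i)) *
        ∏ i, a i i := by
  simp only [← Finset.prod_mul_distrib]
  refine Finset.prod_congr rfl fun i _ => ?_
  simp only [Perm.mul_apply, swap_apply_def]
  split_ifs <;> simp_all [mul_comm, mul_left_comm]

theorem not_forall_sign_mul_prod_eq_one [DecidableEq ι] {R : Type*} [CommRing R]
    (hR : (-1 : R) ≠ 1) {x y z : ι} (hxy : x ≠ y) (hyz : y ≠ z) (hxz : x ≠ z)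
    (a : Matrix ι ι R) : ¬ ∀ σ : Perm ι, ((Perm.sign σ : ℤ) : R) * ∏ i, a i (σ i) = 1 := by
  intro h
  have prod_swap {u v : ι} (huv : u ≠ v) : ∏ i, a i (swap u v i) = -1 := by
    simpa [Perm.sign_swap huv, neg_eq_iff_eq_neg] using h (swap u v)
  have prod_of_sign_eq_one {σ : Perm ι} (hσ : Perm.sign σ = 1) : ∏ i, a i (σ i) = 1 := by
    simpa [hσ] using h σ
  have prod_id : ∏ i, a i i = 1 := by simpa using h 1
  have key := prod_swaps_eq_prod_three_cycles a hxy hyz hxz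
  rw [prod_swap hxy, prod_swap hyz, prod_swap hxz, prod_id,
    prod_of_sign_eq_one (by simp [Perm.sign_swap hxy, Perm.sign_swap hyz]),
    prod_of_sign_eq_one (by simp [Perm.sign_swap hxy, Perm.sign_swap hyz])] at key
  exact hR (by linear_combination key)

noncomputable def permExponent (σ : Perm ι) : ι × ι →₀ ℕ :=
  ∑ i, Finsupp.single (i, σ i) 1

lemma permExponent_apply [DecidableEq ι] (σ : Perm ι) (i j : ι) :
    permExponent σ (i, j) = if σ i = j then 1 else 0 := by
  simp [permExponent, Finsupp.finsetSum_apply, Finsupp.single_apply, Prod.ext_iff, ite_and]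

lemma permExponent_injective : Function.Injective (permExponent (ι := ι)) := by
  classical
  intro σ τ h
  ext i
  simpa [permExponent_apply] using congr($h (i, τ i))

variable {R : Type*} [CommRing R]

lemma prod_X_eq_monomial_permExponent (σ : Perm ι) :
    ∏ i, (X (i, σ i) : MvPolynomial (ι × ι) R) = monomial (permExponent σ) 1 := by
  simp [permExponent, monomial_sum_one, X]

lemma coeff_permExponent_prod_X [DecidableEq ι] (σ τ : Perm ι) :
    coeff (permExponent σ) (∏ i, (X (i, τ i) : MvPolynomial (ι × ι) R)) =
      if τ = σ then 1 else 0 := by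
  simp [prod_X_eq_monomial_permExponent, coeff_monomial, permExponent_injective.eq_iff]

lemma coeff_permExponent_sum_prod_X [DecidableEq ι] (σ : Perm ι) :
    coeff (permExponent σ) (∑ τ : Perm ι, ∏ i, (X (i, τ i) : MvPolynomial (ι × ι) R)) = 1 := by
  simp [coeff_sum, coeff_permExponent_prod_X]

lemma coeff_permExponent_det [DecidableEq ι] (a : Matrix ι ι R) (σ : Perm ι) :
    coeff (permExponent σ) (Matrix.of fun i j => C (a i j) * X (i, j)).det =
      (Perm.sign σ : ℤ) * ∏ i, a i (σ i) := by
  rw [← Matrix.det_transpose, Matrix.det_apply]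
  simp only [Matrix.transpose_apply, Matrix.of_apply, Finset.prod_mul_distrib, ← map_prod,
    Units.smul_def, coeff_sum, coeff_smul, coeff_C_mul, coeff_permExponent_prod_X]
  simp

/-- **Szegő's theorem** (answering Pólya's question): for every `n ≥ 3` there is no `n × n`
sign matrix `ε` (all entries `±1`) such that `PER_n` equals the determinant of the matrix
with `(i,j)`-entry `ε_{ij} · x_{ij}`, as polynomials over ℂ. -/
theorem szego (n : ℕ) (hn : 3 ≤ n) :
    ¬ ∃ ε : Matrix (Fin n) (Fin n) ℂ,
      (∀ i j, ε i j = 1 ∨ ε i j = -1) ∧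
      permPoly n = Matrix.det (Matrix.of fun i j => C (ε i j) * X (i, j)) := by
  rintro ⟨ε, -, hdet⟩
  have h2 : 2 < n := hn
  have h01 : (⟨0, by omega⟩ : Fin n) ≠ ⟨1, by omega⟩ := by simp
  have h12 : (⟨1, by omega⟩ : Fin n) ≠ ⟨2, by omega⟩ := by simp
  have h02 : (⟨0, by omega⟩ : Fin n) ≠ ⟨2, by omega⟩ := by simp
  refine not_forall_sign_mul_prod_eq_one (by norm_num) h01 h12 h02 ε fun σ => ?_
  rw [← coeff_permExponent_det, ← hdet, permPoly, coeff_permExponent_sum_prod_X]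
end

section
/- The determinant is characterized by its symmetries: let n ≥ 1 and let f be a multivariate polynomial over ℂ in the n² variables x_{ij}, homogeneous of degree n, such that (i) for all A, B ∈ SL_n(ℂ) and all X ∈ ℂ^{n×n} one has f(A·X·B) = f(X), and (ii) f(Xᵀ) = f(X) for all X ∈ ℂ^{n×n}. Then there exists z ∈ ℂ with f = z·DET_n. -/
open Matrix

/-- The determinant polynomial `DET_n = ∑_{π ∈ S_n} sgn(π) ∏_i x_{i,π(i)}` in the `n²`
variables `x_{ij}`, over ℂ. -/
noncomputable def detPoly (n : ℕ) : MvPolynomial (Fin n × Fin n) ℂ :=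
  ∑ π : Equiv.Perm (Fin n),
    MvPolynomial.C ((Equiv.Perm.sign π : ℤ) : ℂ) * ∏ i, MvPolynomial.X (i, π i)

/-!
Every invertible `X` is `t • Y` with `det Y = 1` and `tⁿ = det X`. Left invariance under
`SL_n` gives `f(Y) = f(Y · 1) = f(1)`, and homogeneity of degree `n` then gives
`f(X) = tⁿ f(1) = f(1) det X`. So `f` and `f(1) · DET_n` agree on the Zariski-dense set
of invertible matrices, hence are equal.
-/

open MvPolynomial

theorem MvPolynomial.IsHomogeneous.eval_smul {R σ : Type*} [CommSemiring R]
    {f : MvPolynomial σ R} {n : ℕ} (hf : f.IsHomogeneous n) (c : R) (x : σ → R) :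
    eval (c • x) f = c ^ n * eval x f := by
  rw [eval_eq, eval_eq, Finset.mul_sum]
  refine Finset.sum_congr rfl fun d hd => ?_
  have hdeg : d.degree = n := by
    by_contra h
    exact (mem_support_iff.mp hd) (hf.coeff_eq_zero h)
  simp_rw [Pi.smul_apply, smul_eq_mul, mul_pow, Finset.prod_mul_distrib,
    Finset.prod_pow_eq_pow_sum, ← hdeg, Finsupp.degree_apply]
  ring

theorem eval_detPoly (n : ℕ) (X : Matrix (Fin n) (Fin n) ℂ) :
    eval (fun p => X p.1 p.2) (detPoly n) = X.det := by
  rw [← det_transpose, det_apply']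
  simp [detPoly, transpose_apply]

theorem MvPolynomial.eq_of_eval_eq_of_det_ne_zero {R ι : Type*} [CommRing R] [IsDomain R]
    [Infinite R] [Fintype ι] [DecidableEq ι] {f g : MvPolynomial (ι × ι) R}
    (h : ∀ X : Matrix ι ι R, X.det ≠ 0 →
      eval (fun p => X p.1 p.2) f = eval (fun p => X p.1 p.2) g) :
    f = g := by
  have hdet : ∀ X : Matrix ι ι R,
      eval (fun p => X p.1 p.2) (mvPolynomialX ι ι R).det = X.det := fun X => by
    rw [RingHom.map_det, mvPolynomialX_mapMatrix_eval]
  have hmul : (mvPolynomialX ι ι R).det * (f - g) = 0 := by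
    refine MvPolynomial.funext fun x => ?_
    have hx : (fun p => (Matrix.of fun i j => x (i, j)) p.1 p.2) = x := rfl
    have hfg := h (Matrix.of fun i j => x (i, j))
    rw [← hdet, hx] at hfg
    rw [map_mul, map_sub, map_zero]
    by_cases h0 : eval x (mvPolynomialX ι ι R).det = 0
    · rw [h0, zero_mul]
    · rw [hfg h0, sub_self, mul_zero]
  exact sub_eq_zero.mp ((mul_eq_zero.mp hmul).resolve_left (det_mvPolynomialX_ne_zero ι R))

section

variable {K ι : Type*} [Field K] [IsAlgClosed K] [Fintype ι] [DecidableEq ι]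

theorem Matrix.exists_ne_zero_pow_card_eq_det {X : Matrix ι ι K}
    (hX : X.det ≠ 0) : ∃ t ≠ 0, t ^ Fintype.card ι = X.det := by
  rcases (Fintype.card ι).eq_zero_or_pos with h | h
  · have : IsEmpty ι := Fintype.card_eq_zero_iff.mp h
    exact ⟨1, one_ne_zero, by simp⟩
  · obtain ⟨t, ht⟩ := IsAlgClosed.exists_pow_nat_eq X.det h
    exact ⟨t, fun h0 => hX (by rw [← ht, h0, zero_pow h.ne']), ht⟩

theorem eval_eq_eval_one_mul_det_of_isHomogeneous
    {f : MvPolynomial (ι × ι) K} (hf : f.IsHomogeneous (Fintype.card ι))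
    (hinv : ∀ A X : Matrix ι ι K, A.det = 1 →
      eval (fun p => (A * X) p.1 p.2) f = eval (fun p => X p.1 p.2) f)
    {X : Matrix ι ι K} (hX : X.det ≠ 0) :
    eval (fun p => X p.1 p.2) f = eval (fun p => (1 : Matrix ι ι K) p.1 p.2) f * X.det := by
  obtain ⟨t, ht0, ht⟩ := exists_ne_zero_pow_card_eq_det hX
  set Y := t⁻¹ • X
  have hY : Y.det = 1 := by rw [det_smul, inv_pow, ht, inv_mul_cancel₀ hX]
  have hXY : (fun p : ι × ι => X p.1 p.2) = t • fun p => Y p.1 p.2 := by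
    ext p
    simp [Y, mul_inv_cancel_left₀ ht0]
  rw [hXY, hf.eval_smul, ← hinv Y 1 hY, mul_one, ht, mul_comm]

end

theorem det_characterized_by_symmetries_general (n : ℕ)
    (f : MvPolynomial (Fin n × Fin n) ℂ)
    (hhom : f.IsHomogeneous n)
    (hAB : ∀ A B X : Matrix (Fin n) (Fin n) ℂ, A.det = 1 → B.det = 1 →
      MvPolynomial.eval (fun p => (A * X * B) p.1 p.2) f =
      MvPolynomial.eval (fun p => X p.1 p.2) f) :
    ∃ z : ℂ, f = MvPolynomial.C z * detPoly n := by
  refine ⟨eval (fun p => (1 : Matrix (Fin n) (Fin n) ℂ) p.1 p.2) f,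
    eq_of_eval_eq_of_det_ne_zero fun X hX => ?_⟩
  have hinv : ∀ A X : Matrix (Fin n) (Fin n) ℂ, A.det = 1 →
      eval (fun p => (A * X) p.1 p.2) f = eval (fun p => X p.1 p.2) f := fun A X hA => by
    simpa using hAB A 1 X hA det_one
  rw [eval_mul, eval_C, eval_detPoly]
  exact eval_eq_eval_one_mul_det_of_isHomogeneous (by simpa using hhom) hinv hX

/-- **The determinant is characterized by its symmetries**: a degree-`n` homogeneous
polynomial `f` in the `n²` variables `x_{ij}` over ℂ which satisfies `f(A·X·B) = f(X)`
for all `A, B ∈ SL_n(ℂ)` and `f(Xᵀ) = f(X)` must be a scalar multiple of `DET_n`. -/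
theorem det_characterized_by_symmetries (n : ℕ) (hn : 1 ≤ n)
    (f : MvPolynomial (Fin n × Fin n) ℂ)
    (hhom : f.IsHomogeneous n)
    (hAB : ∀ A B X : Matrix (Fin n) (Fin n) ℂ, A.det = 1 → B.det = 1 →
      MvPolynomial.eval (fun p => (A * X * B) p.1 p.2) f =
      MvPolynomial.eval (fun p => X p.1 p.2) f)
    (htrans : ∀ X : Matrix (Fin n) (Fin n) ℂ,
      MvPolynomial.eval (fun p => Xᵀ p.1 p.2) f =
      MvPolynomial.eval (fun p => X p.1 p.2) f) :
    ∃ z : ℂ, f = MvPolynomial.C z * detPoly n :=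
  det_characterized_by_symmetries_general n f hhom hAB
end

section
/- Hurwitz's 1-2-4-8 theorem: for n ≥ 1, there exist bilinear forms z_1, …, z_n in the variables x_1,…,x_n and y_1,…,y_n over ℝ satisfying the identity (x_1² + ⋯ + x_n²)·(y_1² + ⋯ + y_n²) = z_1² + ⋯ + z_n² (as an identity of real polynomials, equivalently for all real values of the x_i and y_j) if and only if n ∈ {1, 2, 4, 8}. -/
/-!
Evaluating the identity at real points turns the bilinear forms into matrices `A₁, …, Aₙ` with
`Aⱼᵀ Aₖ + Aₖᵀ Aⱼ = 2 δⱼₖ`. Then `Bᵢ = Aₙᵀ Aᵢ` (`i < n`) are `n - 1` pairwise anticommuting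
skew-symmetric matrices with `Bᵢ² = -1`. Already `det (B₁)² = (-1)ⁿ` forces `n` to be even.
A monomial `B_S` in the generators indexed by a set `S` anticommutes with some `Bᵢ` unless `S` is
empty or everything, and then has trace zero; so the monomials `B_S` with `S` avoiding a fixed
generator are linearly independent, and `2ⁿ⁻² ≤ n²` gives `n ≤ 8`. For `n = 6` the sixteen
monomials of degree `1`, `2` and `5` are independent and skew-symmetric, while the skew-symmetric
`6 × 6` matrices form a space of dimension `15`. Conversely, the norms of `ℝ`, `ℂ`, `ℍ` and the
octonions are multiplicative.
-/

open MvPolynomial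

/-- A polynomial in the variables `x_1,…,x_n` (indexed by `Sum.inl`) and `y_1,…,y_n`
(indexed by `Sum.inr`) over ℝ is a *bilinear form* if it has the shape
`∑_{i,j} a_{ij} x_i y_j`. -/
def IsBilinearForm (n : ℕ) (f : MvPolynomial (Fin n ⊕ Fin n) ℝ) : Prop :=
  ∃ a : Fin n → Fin n → ℝ,
    f = ∑ i, ∑ j, C (a i j) * X (Sum.inl i) * X (Sum.inr j)

open Matrix Finset

namespace Hurwitz

structure CliffordRelations {ι A : Type*} [Ring A] (B : ι → A) : Prop where
  mul_self : ∀ i, B i * B i = -1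
  anticomm : ∀ ⦃i j⦄, i ≠ j → B i * B j = -(B j * B i)

namespace CliffordRelations

variable {ι A : Type*} [Ring A] {B : ι → A} (hB : CliffordRelations B)
include hB

theorem prod_mul [DecidableEq ι] (l : List ι) (i : ι) :
    (l.map B).prod * B i = (-1 : ℤ) ^ l.countP (· ≠ i) • (B i * (l.map B).prod) := by
  induction l with
  | nil => simp
  | cons j l ih =>
    rw [List.map_cons, List.prod_cons, mul_assoc, ih, mul_smul_comm, ← mul_assoc,
      List.countP_cons]
    by_cases hji : j = i
    · subst hji
      simp [mul_assoc]
    · simp [hji, hB.anticomm hji, pow_succ, mul_assoc]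

theorem prod_mul_prod_reverse (l : List ι) :
    (l.map B).prod * (l.reverse.map B).prod = (-1 : ℤ) ^ l.length • 1 := by
  induction l with
  | nil => simp
  | cons j l ih =>
    rw [List.reverse_cons, List.map_append, List.prod_append, List.map_cons, List.prod_cons,
      mul_assoc, ← mul_assoc (l.map B).prod, ih, smul_mul_assoc, one_mul, mul_smul_comm,
      List.map_singleton, List.prod_singleton, hB.mul_self, List.length_cons, pow_succ,
      mul_neg_one, neg_smul, smul_neg]

theorem prod_reverse [DecidableEq ι] {l : List ι} (hl : l.Nodup) :
    (l.reverse.map B).prod = (-1 : ℤ) ^ l.length.choose 2 • (l.map B).prod := by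
  induction l with
  | nil => simp
  | cons j l ih =>
    obtain ⟨hj, hl⟩ := List.nodup_cons.mp hl
    have hcount : l.countP (· ≠ j) = l.length := List.countP_eq_length.mpr fun i hi => by
      simpa using ne_of_mem_of_not_mem hi hj
    rw [List.reverse_cons, List.map_append, List.prod_append, ih hl, List.map_singleton,
      List.prod_singleton, smul_mul_assoc, hB.prod_mul, hcount, smul_smul, ← pow_add,
      List.length_cons, Nat.choose_succ_succ', Nat.choose_one_right, add_comm l.length,
      List.map_cons, List.prod_cons]

end CliffordRelations

theorem card_erase_eq_countP_toList {ι : Type*} [DecidableEq ι] (s : Finset ι) (i : ι) :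
    #(s.erase i) = s.toList.countP (· ≠ i) := by
  rw [← Multiset.coe_countP, coe_toList, ← filter_ne', card_def, filter_val,
    Multiset.countP_eq_card_filter]

theorem exists_odd_card_erase_add_card_erase {ι : Type*} [DecidableEq ι] {s t : Finset ι}
    (hst : s ≠ t) (h : ∃ j, (j ∈ s ↔ j ∈ t)) : ∃ i, Odd (#(s.erase i) + #(t.erase i)) := by
  rcases Nat.even_or_odd (#s + #t) with heven | hodd
  · obtain ⟨i, hi⟩ : ∃ i, ¬(i ∈ s ↔ i ∈ t) := by
      by_contra! h'
      exact hst (Finset.ext h')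
    refine ⟨i, ?_⟩
    rw [Nat.even_iff] at heven
    rw [Nat.odd_iff]
    by_cases his : i ∈ s
    · have := card_erase_add_one his
      rw [erase_eq_of_notMem fun hit => hi (iff_of_true his hit)]
      omega
    · have hit : i ∈ t := by tauto
      have := card_erase_add_one hit
      rw [erase_eq_of_notMem his]
      omega
  · obtain ⟨j, hj⟩ := h
    refine ⟨j, ?_⟩
    by_cases hjs : j ∈ s
    · rw [Nat.odd_iff] at hodd ⊢
      have := card_erase_add_one hjs
      have := card_erase_add_one (hj.mp hjs)
      omega
    · rwa [erase_eq_of_notMem hjs, erase_eq_of_notMem (hjs ∘ hj.mpr)]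

section Independence

variable {n R : Type*} [Fintype n] [DecidableEq n] [Field R] [CharZero R]

theorem trace_eq_zero_of_mul_eq_neg {M J : Matrix n n R} (hJ : J * J = -1)
    (h : M * J = -(J * M)) : trace M = 0 := by
  have h1 : trace (M * J * J) = -trace M := by rw [mul_assoc, hJ, mul_neg_one, trace_neg]
  have h2 : trace (M * J * J) = -trace (M * J * J) :=
    calc trace (M * J * J) = trace (-(J * M) * J) := by rw [h]
      _ = -trace (J * (M * J)) := by rw [neg_mul, trace_neg, mul_assoc]
      _ = -trace (M * J * J) := by rw [trace_mul_comm]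
  rw [h1, self_eq_neg] at h2
  exact neg_eq_zero.mp h2

variable {ι : Type*} [DecidableEq ι] {B : ι → Matrix n n R}

/-- The hypothesis on `s` and `t` says `s ∆ t ≠ univ`: then some `B i` anticommutes with
`B_s B_tʳᵉᵛ`, because an odd number of the factors of that product differ from `B i`. -/
theorem CliffordRelations.trace_prod_mul_prod_reverse_eq_zero (hB : CliffordRelations B)
    {s t : Finset ι} (hst : s ≠ t) (h : ∃ j, (j ∈ s ↔ j ∈ t)) :
    trace ((s.toList.map B).prod * (t.toList.reverse.map B).prod) = 0 := by
  obtain ⟨i, hi⟩ := exists_odd_card_erase_add_card_erase hst h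
  rw [← List.prod_append, ← List.map_append]
  refine trace_eq_zero_of_mul_eq_neg (hB.mul_self i) ?_
  rw [hB.prod_mul, List.countP_append, List.countP_reverse, ← card_erase_eq_countP_toList,
    ← card_erase_eq_countP_toList, hi.neg_one_pow, neg_one_smul]

theorem CliffordRelations.linearIndependent [Nonempty n] (hB : CliffordRelations B)
    {𝒮 : Finset (Finset ι)} (h𝒮 : ∀ s ∈ 𝒮, ∀ t ∈ 𝒮, s ≠ t → ∃ j, (j ∈ s ↔ j ∈ t)) :
    LinearIndependent R (fun s : 𝒮 => (s.1.toList.map B).prod) := by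
  rw [Fintype.linearIndependent_iff]
  intro g hg t
  have key := congrArg (fun M => trace (M * (t.1.toList.reverse.map B).prod)) hg
  simp only [sum_mul, trace_sum, smul_mul_assoc, trace_smul, zero_mul, trace_zero] at key
  have hoff (s : 𝒮) (hs : s ≠ t) :
      g s • trace ((s.1.toList.map B).prod * (t.1.toList.reverse.map B).prod) = 0 := by
    rw [hB.trace_prod_mul_prod_reverse_eq_zero (Subtype.coe_ne_coe.mpr hs)
      (h𝒮 _ s.2 _ t.2 (Subtype.coe_ne_coe.mpr hs)), smul_zero]
  rw [sum_eq_single t (fun s _ hs => hoff s hs) (by simp), hB.prod_mul_prod_reverse, trace_smul,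
    trace_one] at key
  simpa using key

theorem CliffordRelations.card_le [Nonempty n] (hB : CliffordRelations B)
    {𝒮 : Finset (Finset ι)} (h𝒮 : ∀ s ∈ 𝒮, ∀ t ∈ 𝒮, s ≠ t → ∃ j, (j ∈ s ↔ j ∈ t)) :
    #𝒮 ≤ Fintype.card n ^ 2 := by
  simpa [Module.finrank_matrix, sq] using
    (hB.linearIndependent (R := R) h𝒮).fintype_card_le_finrank

end Independence

section Skew

variable {n R : Type*} [Fintype n] [DecidableEq n] [CommRing R] {ι : Type*}
  {B : ι → Matrix n n R}

theorem transpose_prod_map_of_transpose_eq_neg (hskew : ∀ i, (B i)ᵀ = -B i) (l : List ι) :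
    ((l.map B).prod)ᵀ = (-1 : ℤ) ^ l.length • (l.reverse.map B).prod := by
  induction l with
  | nil => simp
  | cons j l ih =>
    rw [List.map_cons, List.prod_cons, transpose_mul, ih, hskew, List.reverse_cons,
      List.map_append, List.prod_append, List.map_singleton, List.prod_singleton,
      smul_mul_assoc, mul_neg, List.length_cons, pow_succ, mul_neg_one, neg_smul, smul_neg]

theorem CliffordRelations.transpose_prod_eq_neg [DecidableEq ι] (hB : CliffordRelations B)
    (hskew : ∀ i, (B i)ᵀ = -B i) {l : List ι} (hl : l.Nodup)
    (hodd : Odd ((l.length + 1).choose 2)) :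
    ((l.map B).prod)ᵀ = -(l.map B).prod := by
  rw [Nat.choose_succ_succ', Nat.choose_one_right] at hodd
  rw [transpose_prod_map_of_transpose_eq_neg hskew, hB.prod_reverse hl, smul_smul, ← pow_add,
    hodd.neg_one_pow, neg_one_smul]

end Skew

theorem card_le_of_linearIndependent_of_transpose_eq_neg {n R κ : Type*} [Fintype n]
    [LinearOrder n] [Field R] [CharZero R] [Fintype κ] {v : κ → Matrix n n R}
    (hv : LinearIndependent R v) (hskew : ∀ k, (v k)ᵀ = -v k) :
    Fintype.card κ ≤ Fintype.card {p : n × n // p.1 < p.2} := by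
  let upper : Matrix n n R →ₗ[R] ({p : n × n // p.1 < p.2} → R) :=
    { toFun A p := A p.1.1 p.1.2
      map_add' _ _ := rfl
      map_smul' _ _ := rfl }
  have hspan : Submodule.span R (Set.range v) ≤ skewAdjointMatricesSubmodule 1 := by
    rw [Submodule.span_le]
    rintro _ ⟨k, rfl⟩
    simp [mem_skewAdjointMatricesSubmodule, Matrix.IsSkewAdjoint, Matrix.IsAdjointPair, hskew]
  have hker : Disjoint (skewAdjointMatricesSubmodule (1 : Matrix n n R)) (LinearMap.ker upper) := by
    rw [Submodule.disjoint_def]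
    intro A hA hupper
    simp only [mem_skewAdjointMatricesSubmodule, Matrix.IsSkewAdjoint, Matrix.IsAdjointPair,
      Matrix.mul_one, Matrix.one_mul] at hA
    have hentry (i j : n) : A i j = -A j i := by simpa using congrFun (congrFun hA j) i
    have hzero (i j : n) (hij : i < j) : A i j = 0 := congrFun hupper ⟨(i, j), hij⟩
    ext i j
    rcases lt_trichotomy i j with hij | rfl | hij
    · exact hzero i j hij
    · exact self_eq_neg.mp (hentry i i)
    · rw [hentry, hzero j i hij, neg_zero, Matrix.zero_apply]
  simpa using (hv.map (f := upper) (hker.mono_left hspan)).fintype_card_le_finrank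

theorem even_card_of_mul_self_eq_neg_one {n R : Type*} [Fintype n] [DecidableEq n] [CommRing R]
    [LinearOrder R] [IsStrictOrderedRing R] {J : Matrix n n R} (hJ : J * J = -1) :
    Even (Fintype.card n) := by
  have hdet := congrArg det hJ
  rw [det_mul, det_neg, det_one, mul_one] at hdet
  by_contra hodd
  rw [(Nat.not_even_iff_odd.mp hodd).neg_one_pow] at hdet
  nlinarith [mul_self_nonneg (det J)]

section Count

variable {n R : Type*} [Fintype n] [DecidableEq n] [Nonempty n] [Field R] [CharZero R]

theorem CliffordRelations.two_pow_card_sub_one_le {ι : Type*} [Fintype ι] [DecidableEq ι]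
    {B : ι → Matrix n n R} (hB : CliffordRelations B) (i₀ : ι) :
    2 ^ (Fintype.card ι - 1) ≤ Fintype.card n ^ 2 := by
  have h := hB.card_le (𝒮 := (univ.erase i₀).powerset) fun s hs t ht _ =>
    ⟨i₀, iff_of_false (fun h => by simpa using mem_powerset.mp hs h)
      (fun h => by simpa using mem_powerset.mp ht h)⟩
  rwa [card_powerset, card_erase_of_mem (mem_univ _), card_univ] at h

theorem CliffordRelations.sixteen_le [LinearOrder n] {B : Fin 5 → Matrix n n R}
    (hB : CliffordRelations B) (hskew : ∀ i, (B i)ᵀ = -B i) :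
    16 ≤ Fintype.card {p : n × n // p.1 < p.2} := by
  let 𝒮 : Finset (Finset (Fin 5)) := {s | #s = 1 ∨ #s = 2 ∨ #s = 5}
  have h𝒮 : ∀ s ∈ 𝒮, ∀ t ∈ 𝒮, s ≠ t → ∃ j, (j ∈ s ↔ j ∈ t) := by decide
  have hcard : Fintype.card 𝒮 = 16 := by rw [Fintype.card_coe]; decide
  refine hcard ▸ card_le_of_linearIndependent_of_transpose_eq_neg (hB.linearIndependent h𝒮)
    fun s => hB.transpose_prod_eq_neg hskew s.1.nodup_toList ?_
  rw [length_toList]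
  rcases (mem_filter.mp s.2).2 with h | h | h <;> rw [h] <;> decide

end Count

theorem add_two_sq_lt_two_pow {k : ℕ} (hk : 8 ≤ k) : (k + 2) ^ 2 < 2 ^ k := by
  induction k, hk using Nat.le_induction with
  | base => norm_num
  | succ k hk ih =>
    rw [pow_succ 2 k]
    nlinarith

theorem CliffordRelations.eq_one_or_two_or_four_or_eight {R : Type*} [Field R] [LinearOrder R]
    [IsStrictOrderedRing R] {m : ℕ} {B : Fin m → Matrix (Fin (m + 1)) (Fin (m + 1)) R}
    (hB : CliffordRelations B) (hskew : ∀ i, (B i)ᵀ = -B i) :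
    m + 1 = 1 ∨ m + 1 = 2 ∨ m + 1 = 4 ∨ m + 1 = 8 := by
  rcases Nat.eq_zero_or_pos m with rfl | hm
  · exact Or.inl rfl
  obtain ⟨k, hk⟩ : Even (m + 1) := by
    simpa using even_card_of_mul_self_eq_neg_one (hB.mul_self ⟨0, hm⟩)
  have hsmall : m < 9 := by
    by_contra! h
    obtain ⟨k, rfl⟩ : ∃ k, m = k + 1 := ⟨m - 1, by omega⟩
    have hpow := hB.two_pow_card_sub_one_le ⟨0, hm⟩
    simp only [Fintype.card_fin, add_tsub_cancel_right] at hpow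
    exact hpow.not_gt (add_two_sq_lt_two_pow (by omega))
  have hsix : m ≠ 5 := by
    rintro rfl
    exact absurd (hB.sixteen_le hskew) (by decide)
  omega

section Composition

variable {n R : Type*} [Fintype n]

def IsCompositionFormula [CommSemiring R] (a : n → n → n → R) : Prop :=
  ∀ x y : n → R, (x ⬝ᵥ x) * (y ⬝ᵥ y) = ∑ k, (∑ i, ∑ j, a k i j * x i * y j) ^ 2

def rightMulMatrix [CommSemiring R] (a : n → n → n → R) (y : n → R) : Matrix n n R :=
  of fun k i => ∑ j, a k i j * y j

theorem rightMulMatrix_add [CommSemiring R] (a : n → n → n → R) (y y' : n → R) :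
    rightMulMatrix a (y + y') = rightMulMatrix a y + rightMulMatrix a y' := by
  ext k i
  simp [rightMulMatrix, mul_add, sum_add_distrib]

theorem rightMulMatrix_mulVec [CommSemiring R] (a : n → n → n → R) (x y : n → R) :
    rightMulMatrix a y *ᵥ x = fun k => ∑ i, ∑ j, a k i j * x i * y j := by
  ext k
  simp only [mulVec, dotProduct, rightMulMatrix, of_apply, sum_mul]
  exact sum_congr rfl fun i _ => sum_congr rfl fun j _ => by ring

variable [DecidableEq n] [Field R] [CharZero R]

theorem eq_zero_of_dotProduct_mulVec_self_eq_zero {S : Matrix n n R} (hS : Sᵀ = S)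
    (h : ∀ x, x ⬝ᵥ S *ᵥ x = 0) : S = 0 := by
  ext i j
  have hi := h (Pi.single i 1)
  have hj := h (Pi.single j 1)
  have hij := h (Pi.single i 1 + Pi.single j 1)
  have hsymm : S j i = S i j := by simpa using congrFun (congrFun hS i) j
  simp only [mulVec_add, dotProduct_add, add_dotProduct, mulVec_single_one, single_one_dotProduct,
    col_apply] at hi hj hij
  rw [Matrix.zero_apply]
  linear_combination (hij - hi - hj - hsymm) / 2

theorem transpose_mul_self_eq_smul_one {M : Matrix n n R} {c : R}
    (h : ∀ x, (M *ᵥ x) ⬝ᵥ (M *ᵥ x) = c * (x ⬝ᵥ x)) : Mᵀ * M = c • 1 := by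
  rw [← sub_eq_zero]
  refine eq_zero_of_dotProduct_mulVec_self_eq_zero (by simp [transpose_sub, transpose_mul])
    fun x => ?_
  rw [sub_mulVec, dotProduct_sub, ← mulVec_mulVec, dotProduct_mulVec, vecMul_transpose, h,
    smul_mulVec, one_mulVec, dotProduct_smul, smul_eq_mul, sub_self]

variable {a : n → n → n → R} (h : IsCompositionFormula a)
include h

theorem IsCompositionFormula.transpose_rightMulMatrix_mul_self (y : n → R) :
    (rightMulMatrix a y)ᵀ * rightMulMatrix a y = (y ⬝ᵥ y) • 1 := by
  refine transpose_mul_self_eq_smul_one fun x => ?_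
  rw [mul_comm, h, rightMulMatrix_mulVec]
  simp only [dotProduct, sq]

theorem IsCompositionFormula.transpose_rightMulMatrix_single_mul_self (j : n) :
    (rightMulMatrix a (Pi.single j 1))ᵀ * rightMulMatrix a (Pi.single j 1) = 1 := by
  simpa using h.transpose_rightMulMatrix_mul_self (Pi.single j 1)

theorem IsCompositionFormula.transpose_rightMulMatrix_single_mul_anticomm ⦃j k : n⦄
    (hjk : j ≠ k) :
    (rightMulMatrix a (Pi.single j 1))ᵀ * rightMulMatrix a (Pi.single k 1) =
      -((rightMulMatrix a (Pi.single k 1))ᵀ * rightMulMatrix a (Pi.single j 1)) := by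
  have hsum := h.transpose_rightMulMatrix_mul_self (Pi.single j 1 + Pi.single k 1)
  have hdot : (Pi.single j 1 + Pi.single k 1 : n → R) ⬝ᵥ (Pi.single j 1 + Pi.single k 1) = 2 := by
    simp [dotProduct_add, hjk, hjk.symm, one_add_one_eq_two]
  rw [hdot, rightMulMatrix_add, transpose_add, add_mul, mul_add, mul_add,
    h.transpose_rightMulMatrix_single_mul_self, h.transpose_rightMulMatrix_single_mul_self,
    two_smul] at hsum
  rw [← add_eq_zero_iff_eq_neg, ← sub_eq_zero.mpr hsum]
  abel

end Composition

theorem cliffordRelations_transpose_last_mul {n R : Type*} [Fintype n] [DecidableEq n]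
    [CommRing R] {m : ℕ} {A : Fin (m + 1) → Matrix n n R} (hA : ∀ j, (A j)ᵀ * A j = 1)
    (hA' : ∀ ⦃j k⦄, j ≠ k → (A j)ᵀ * A k = -((A k)ᵀ * A j)) :
    CliffordRelations (fun i : Fin m => (A (Fin.last m))ᵀ * A i.castSucc) ∧
      ∀ i : Fin m, ((A (Fin.last m))ᵀ * A i.castSucc)ᵀ = -((A (Fin.last m))ᵀ * A i.castSucc) := by
  have hlast : A (Fin.last m) * (A (Fin.last m))ᵀ = 1 := mul_eq_one_comm.mp (hA _)
  have hskew (i : Fin m) :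
      ((A (Fin.last m))ᵀ * A i.castSucc)ᵀ = -((A (Fin.last m))ᵀ * A i.castSucc) := by
    rw [transpose_mul, transpose_transpose, hA' (Fin.castSucc_lt_last i).ne]
  have hmul (i j : Fin m) :
      (A (Fin.last m))ᵀ * A i.castSucc * ((A (Fin.last m))ᵀ * A j.castSucc) =
        -((A i.castSucc)ᵀ * A j.castSucc) := by
    rw [← neg_neg ((A (Fin.last m))ᵀ * A i.castSucc), ← hskew, neg_mul, transpose_mul,
      transpose_transpose, mul_assoc, ← mul_assoc (A (Fin.last m)), hlast, one_mul]
  refine ⟨⟨fun i => by rw [hmul, hA], fun i j hij => ?_⟩, hskew⟩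
  rw [hmul, hmul, hA' ((Fin.castSucc_injective m).ne hij)]

theorem exists_isBilinearForm_iff (n : ℕ) :
    (∃ z : Fin n → MvPolynomial (Fin n ⊕ Fin n) ℝ,
      (∀ k, IsBilinearForm n (z k)) ∧
      (∑ i, (X (Sum.inl i)) ^ 2) * (∑ j, (X (Sum.inr j)) ^ 2) = ∑ k, (z k) ^ 2) ↔
    ∃ a : Fin n → Fin n → Fin n → ℝ, IsCompositionFormula a := by
  constructor
  · rintro ⟨z, hz, hid⟩
    choose a ha using hz
    refine ⟨a, fun x y => ?_⟩
    simpa [ha, dotProduct, sq] using congrArg (eval (Sum.elim x y)) hid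
  · rintro ⟨a, ha⟩
    refine ⟨fun k => ∑ i, ∑ j, C (a k i j) * X (Sum.inl i) * X (Sum.inr j), fun k => ⟨a k, rfl⟩,
      MvPolynomial.funext fun v => ?_⟩
    simpa [dotProduct, sq] using ha (v ∘ Sum.inl) (v ∘ Sum.inr)

/-- Multiplication table of the octonions in the Cayley–Dickson basis:
`eᵢ * eⱼ = octonionSign i j • e_(i ^^^ j)`. The first `1`, `2`, `4` basis vectors span copies
of `ℝ`, `ℂ` and `ℍ`. -/
def octonionSign : Matrix (Fin 8) (Fin 8) ℝ :=
  !![1,  1,  1,  1,  1,  1,  1,  1;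
     1, -1,  1, -1,  1, -1, -1,  1;
     1, -1, -1,  1,  1,  1, -1, -1;
     1,  1, -1, -1,  1, -1,  1, -1;
     1, -1, -1, -1, -1,  1,  1,  1;
     1,  1, -1,  1, -1, -1, -1,  1;
     1,  1,  1, -1, -1,  1, -1, -1;
     1, -1,  1,  1, -1, -1,  1, -1]

def cayleyDicksonCoeff {n : ℕ} (hn : n ≤ 8) (k i j : Fin n) : ℝ :=
  if (k : ℕ) = i ^^^ j then octonionSign (i.castLE hn) (j.castLE hn) else 0

theorem isCompositionFormula_cayleyDicksonCoeff {n : ℕ} (hn : n = 1 ∨ n = 2 ∨ n = 4 ∨ n = 8) :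
    IsCompositionFormula (cayleyDicksonCoeff (n := n) (by omega)) := by
  rcases hn with rfl | rfl | rfl | rfl <;>
  · intro x y
    simp [dotProduct, Fin.sum_univ_eight, Fin.sum_univ_four, Fin.sum_univ_two,
      cayleyDicksonCoeff, octonionSign]
    ring

end Hurwitz

/-- **Hurwitz's 1-2-4-8 theorem**: for `n ≥ 1`, there exist `n` bilinear forms
`z_1, …, z_n` with `(x_1² + ⋯ + x_n²)·(y_1² + ⋯ + y_n²) = z_1² + ⋯ + z_n²` as real
polynomials if and only if `n ∈ {1, 2, 4, 8}`. -/
theorem hurwitz_one_two_four_eight (n : ℕ) (hn : 1 ≤ n) :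
    (∃ z : Fin n → MvPolynomial (Fin n ⊕ Fin n) ℝ,
      (∀ k, IsBilinearForm n (z k)) ∧
      (∑ i, (X (Sum.inl i)) ^ 2) * (∑ j, (X (Sum.inr j)) ^ 2) = ∑ k, (z k) ^ 2) ↔
    n = 1 ∨ n = 2 ∨ n = 4 ∨ n = 8 := by
  rw [Hurwitz.exists_isBilinearForm_iff]
  refine ⟨fun ⟨a, ha⟩ => ?_, fun h => ⟨_, Hurwitz.isCompositionFormula_cayleyDicksonCoeff h⟩⟩
  obtain ⟨m, rfl⟩ : ∃ m, n = m + 1 := ⟨n - 1, by omega⟩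
  obtain ⟨hB, hskew⟩ := Hurwitz.cliffordRelations_transpose_last_mul
    ha.transpose_rightMulMatrix_single_mul_self ha.transpose_rightMulMatrix_single_mul_anticomm
  exact hB.eq_one_or_two_or_four_or_eight hskew
end

section
/- Descartes-type sparsity bound: a nonzero univariate real polynomial p having at most t nonzero coefficients (i.e. at most t monomials) has at most t − 1 distinct roots in the open interval (0, ∞), regardless of its degree. -/
/-!
Distinct positive roots are counted with multiplicity by `p.roots`, Descartes' rule of signs bounds
that count by the number of sign changes in the coefficient sequence, and a sequence with `t`
nonzero entries changes sign at most `t - 1` times.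
-/

namespace Polynomial

theorem signVariations_le_card_support_sub_one {R : Type*} [Semiring R] [LinearOrder R]
    (P : R[X]) : P.signVariations ≤ P.support.card - 1 := by
  induction h : P.support.card generalizing P with
  | zero => simp [support_eq_empty.mp (Finset.card_eq_zero.mp h)]
  | succ n ih =>
    by_cases hn : n = 0
    · obtain ⟨k, c, -, rfl⟩ := card_support_eq_one.mp (hn ▸ h)
      simp [C_mul_X_pow_eq_monomial]
    · calc P.signVariations ≤ P.eraseLead.signVariations + 1 :=
            signVariations_le_eraseLead_succ P
        _ ≤ n - 1 + 1 := by grw [ih _ (by rw [card_support_eraseLead, h]; rfl)]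
        _ = n + 1 - 1 := by omega

theorem ncard_setOf_pos_eval_eq_zero_le_countP_roots {R : Type*} [CommRing R] [IsDomain R]
    [Preorder R] [DecidableLT R] {p : R[X]} (hp : p ≠ 0) :
    {x : R | 0 < x ∧ p.eval x = 0}.ncard ≤ p.roots.countP (0 < ·) := by
  classical
  have hset : {x : R | 0 < x ∧ p.eval x = 0} = ↑(p.roots.filter (0 < ·)).toFinset := by
    ext x
    simp [mem_roots hp, and_comm]
  rw [hset, Set.ncard_coe_finset, Multiset.countP_eq_card_filter]
  exact Multiset.toFinset_card_le _

end Polynomial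

open Polynomial

/-- **Descartes-type sparsity bound**: a nonzero univariate real polynomial with at most `t`
nonzero coefficients (monomials) has at most `t − 1` distinct roots in `(0, ∞)`,
regardless of its degree. -/
theorem descartes_sparsity_bound (p : Polynomial ℝ) (hp : p ≠ 0) (t : ℕ)
    (ht : p.support.card ≤ t) :
    {x : ℝ | 0 < x ∧ p.eval x = 0}.ncard ≤ t - 1 :=
  calc {x : ℝ | 0 < x ∧ p.eval x = 0}.ncard ≤ p.roots.countP (0 < ·) :=
        ncard_setOf_pos_eval_eq_zero_le_countP_roots hp
    _ ≤ p.signVariations := roots_countP_pos_le_signVariations p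
    _ ≤ p.support.card - 1 := signVariations_le_card_support_sub_one p
    _ ≤ t - 1 := Nat.sub_le_sub_right ht 1
end

section
/- Weighted matrix-tree theorem (Kirchhoff) for the complete graph: let n ≥ 1 and let X_{ij} = X_{ji} (for i ≠ j in {1,…,n}) be independent variables. Define the n×n matrix L over the polynomial ring by L_{ii} = ∑_{ℓ ≠ i} X_{iℓ} and L_{ij} = −X_{ij} for i ≠ j, and let B be the matrix obtained from L by deleting the last row and the last column. Then det(B) = ∑_T ∏_{{i,j} ∈ E(T)} X_{ij}, where the sum ranges over all spanning trees T of the complete graph K_n on the vertex set {1,…,n} (i.e. over all graphs on {1,…,n} that are connected and acyclic). -/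
/-!
Index the non-root vertices of `K_{n+1}` by `Fin n` (via `castSucc`) and take `Fin.last n` as the
root. Row `p` of the reduced Laplacian is `∑_{ℓ ≠ p} X_{pℓ} (e_p - e_ℓ)` with `e_root = 0`, so by
multilinearity `det B = ∑_f (∏_p X_{p f(p)}) det M_f`, where `f` sends each non-root vertex to
another vertex and `M_f` has rows `e_p - e_{f(p)}`. If iterating `f` leads every vertex to the
root, a height decreasing along `f` makes `M_f` block triangular with identity diagonal blocks, so
`det M_f = 1`; otherwise the indicator of the vertices that never reach the root lies in the kernel
of `M_f`. The maps of the first kind are exactly the parent maps of the spanning trees oriented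
towards the root, and `f ↦ {{p, f p}}` is a bijection onto the spanning trees that carries
`∏_p X_{p f(p)}` to `∏_{e ∈ E(T)} X_e`.
-/

open MvPolynomial
open scoped Classical

/-- The weighted Laplacian of the complete graph `K_{n+1}`, with independent variables
`X_{ij} = X_{ji}` indexed by unordered pairs: `L i i = ∑_{ℓ ≠ i} X_{iℓ}` and
`L i j = −X_{ij}` for `i ≠ j`. -/
noncomputable def weightedLaplacian (n : ℕ) :
    Matrix (Fin (n + 1)) (Fin (n + 1)) (MvPolynomial (Sym2 (Fin (n + 1))) ℤ) :=
  Matrix.of fun i j =>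
    if i = j then ∑ ℓ ∈ Finset.univ \ {i}, X s(i, ℓ) else - X s(i, j)

open Finset Matrix

theorem Matrix.det_of_sum_smul_rows {ι κ R : Type*} [Fintype ι] [DecidableEq ι] [DecidableEq κ]
    [CommRing R] (s : ι → Finset κ) (c : ι → κ → R) (v : ι → κ → ι → R) :
    (of fun i => ∑ k ∈ s i, c i k • v i k).det =
      ∑ r ∈ Fintype.piFinset s, (∏ i, c i (r i)) * (of fun i => v i (r i)).det := by
  change detRowAlternating.toMultilinearMap (fun i => ∑ k ∈ s i, c i k • v i k) = _
  rw [MultilinearMap.map_sum_finset]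
  refine sum_congr rfl fun r _ => ?_
  rw [MultilinearMap.map_smul_univ, smul_eq_mul]
  rfl

namespace SimpleGraph

variable {V : Type*} {G : SimpleGraph V}

theorem Connected.exists_adj_dist_lt (hG : G.Connected) {u v : V} (huv : u ≠ v) :
    ∃ w, G.Adj u w ∧ G.dist w v < G.dist u v := by
  obtain ⟨p, hp⟩ := hG.exists_walk_length_eq_dist u v
  have hnil : ¬ p.Nil := Walk.not_nil_of_ne huv
  refine ⟨p.snd, p.adj_snd hnil, ?_⟩
  have := dist_le p.tail
  have := p.length_tail_add_one hnil
  omega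

theorem reachable_of_forall_exists_adj_lt (r : V) (h : V → ℕ)
    (H : ∀ v ≠ r, ∃ u, G.Adj v u ∧ h u < h v) (v : V) : G.Reachable v r := by
  induction hv : h v using Nat.strong_induction_on generalizing v with
  | _ k ih =>
    by_cases hvr : v = r
    · exact hvr ▸ .rfl
    obtain ⟨u, hadj, hlt⟩ := H v hvr
    exact hadj.reachable.trans (ih _ (hv ▸ hlt) u rfl)

theorem isTree_fromEdgeSet_iff [Fintype V] {E : Finset (Sym2 V)} (hE : ∀ e ∈ E, ¬ e.IsDiag) :
    (fromEdgeSet (E : Set (Sym2 V))).IsTree ↔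
      (fromEdgeSet (E : Set (Sym2 V))).Connected ∧ #E + 1 = Fintype.card V := by
  have : (E : Set (Sym2 V)) \ Sym2.diagSet = E :=
    sdiff_eq_left.2 (Set.disjoint_left.2 fun e he hd => hE e he hd)
  rw [isTree_iff_connected_and_card, edgeSet_fromEdgeSet, this, Nat.card_coe_set_eq,
    Set.ncard_coe_finset, Nat.card_eq_fintype_card]

end SimpleGraph

open SimpleGraph

namespace MatrixTree

variable {n : ℕ}

def rootedMap (f : Fin n → Fin (n + 1)) : Fin (n + 1) → Fin (n + 1) :=
  Fin.lastCases (Fin.last n) f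

@[simp] theorem rootedMap_castSucc (f : Fin n → Fin (n + 1)) (p : Fin n) :
    rootedMap f p.castSucc = f p :=
  Fin.lastCases_castSucc p

def ReachesRoot (f : Fin n → Fin (n + 1)) : Prop :=
  ∀ v, ∃ k, (rootedMap f)^[k] v = Fin.last n

theorem reachesRoot_iff_exists_height {f : Fin n → Fin (n + 1)} :
    ReachesRoot f ↔ ∃ h : Fin (n + 1) → ℕ, ∀ p, h (f p) < h p.castSucc := by
  constructor
  · intro hf
    refine ⟨fun v => Nat.find (hf v), fun p => ?_⟩
    have hpos : 0 < Nat.find (hf p.castSucc) :=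
      (Nat.find_pos _).2 (Fin.castSucc_lt_last p).ne
    obtain ⟨k, hk⟩ := Nat.exists_eq_add_one.2 hpos
    have hreach : (rootedMap f)^[k] (f p) = Fin.last n := by
      simpa [hk] using Nat.find_spec (hf p.castSucc)
    exact (Nat.find_min' _ hreach).trans_lt (by simp only [hk]; omega)
  · rintro ⟨h, hh⟩ v
    induction hv : h v using Nat.strong_induction_on generalizing v with
    | _ m ih =>
      induction v using Fin.lastCases with
      | last => exact ⟨0, rfl⟩
      | cast p =>
        obtain ⟨k, hk⟩ := ih _ (hv ▸ hh p) (f p) rfl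
        exact ⟨k + 1, by simpa using hk⟩

section ParentMatrix

variable (R : Type*) [CommRing R]

def edgeRow (p : Fin n) (ℓ : Fin (n + 1)) : Fin n → R :=
  Pi.single p 1 - fun q => if ℓ = q.castSucc then 1 else 0

def parentMatrix (f : Fin n → Fin (n + 1)) : Matrix (Fin n) (Fin n) R :=
  of fun p => edgeRow R p (f p)

variable {R} {f : Fin n → Fin (n + 1)}

theorem parentMatrix_apply_of_ne {p q : Fin n} (hpq : f p ≠ q.castSucc) :
    parentMatrix R f p q = (1 : Matrix (Fin n) (Fin n) R) p q := by
  simp [parentMatrix, edgeRow, hpq, one_apply, Pi.single_apply, eq_comm]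

theorem parentMatrix_mulVec (w : Fin n → R) :
    parentMatrix R f *ᵥ w = w - Fin.lastCases 0 w ∘ f := by
  ext p
  simp only [parentMatrix, edgeRow, mulVec, dotProduct, of_apply, Pi.sub_apply, sub_mul,
    sum_sub_distrib, Pi.single_apply, ite_mul, one_mul, zero_mul, sum_ite_eq', mem_univ, if_true,
    Function.comp_apply]
  congr 1
  induction f p using Fin.lastCases with
  | last => simp [(Fin.castSucc_lt_last _).ne']
  | cast r => simp [Fin.castSucc_inj]

theorem det_parentMatrix_of_reachesRoot (hf : ReachesRoot f) : (parentMatrix R f).det = 1 := by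
  obtain ⟨h, hh⟩ := reachesRoot_iff_exists_height.1 hf
  have hbt : (parentMatrix R f).BlockTriangular fun p => OrderDual.toDual (h p.castSucc) := by
    intro p q hpq
    have hfp : f p ≠ q.castSucc := fun hfp => (hfp ▸ hh p).not_gt hpq
    rw [parentMatrix_apply_of_ne hfp, one_apply_ne]
    rintro rfl
    exact lt_irrefl _ hpq
  rw [hbt.det]
  refine prod_eq_one fun a _ => ?_
  have hblock :
      (parentMatrix R f).toSquareBlock (fun p => OrderDual.toDual (h p.castSucc)) a = 1 := by
    ext ⟨p, hp⟩ ⟨q, hq⟩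
    have hpq : h p.castSucc = h q.castSucc := OrderDual.toDual.injective (hp.trans hq.symm)
    have hfp : f p ≠ q.castSucc := fun hfp => (hfp ▸ hh p).ne' hpq
    simp [toSquareBlock_def, parentMatrix_apply_of_ne hfp, one_apply, Subtype.ext_iff]
  rw [hblock, det_one]

theorem det_parentMatrix_of_not_reachesRoot [IsDomain R] (hf : ¬ ReachesRoot f) :
    (parentMatrix R f).det = 0 := by
  set T : Set (Fin (n + 1)) := {v | ∀ k, (rootedMap f)^[k] v ≠ Fin.last n}
  have hT (p : Fin n) : f p ∈ T ↔ p.castSucc ∈ T := by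
    refine ⟨fun hp k => ?_, fun hp k => by simpa using hp (k + 1)⟩
    cases k with
    | zero => exact (Fin.castSucc_lt_last p).ne
    | succ k => simpa using hp k
  have hlast : Fin.last n ∉ T := fun h => h 0 rfl
  obtain ⟨v, hv⟩ : ∃ v, v ∈ T := by simpa [ReachesRoot, T] using hf
  set w : Fin n → R := fun q => if q.castSucc ∈ T then 1 else 0
  have hw (v : Fin (n + 1)) :
      Fin.lastCases (motive := fun _ => R) 0 w v = if v ∈ T then 1 else 0 := by
    induction v using Fin.lastCases with
    | last => simp [hlast]
    | cast q => simp [w]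
  refine exists_mulVec_eq_zero_iff.1 ⟨w, fun hw0 => ?_, ?_⟩
  · induction v using Fin.lastCases with
    | last => exact hlast hv
    | cast q => simpa [w, hv] using congrFun hw0 q
  · ext p
    simp [parentMatrix_mulVec, hw, hT, w]

theorem det_parentMatrix [IsDomain R] :
    (parentMatrix R f).det = if ReachesRoot f then 1 else 0 := by
  split_ifs with hf
  · exact det_parentMatrix_of_reachesRoot hf
  · exact det_parentMatrix_of_not_reachesRoot hf

end ParentMatrix

theorem reducedLaplacian_eq (n : ℕ) :
    (of fun p q : Fin n => weightedLaplacian n p.castSucc q.castSucc) =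
      of fun p => ∑ ℓ ∈ univ \ {p.castSucc},
        (X s(p.castSucc, ℓ) : MvPolynomial _ ℤ) • edgeRow _ p ℓ := by
  ext p q : 1
  rcases eq_or_ne p q with rfl | hpq
  · simp [weightedLaplacian, edgeRow, mul_sub, sum_sub_distrib]
  · simp [weightedLaplacian, edgeRow, hpq, hpq.symm]

theorem det_reducedLaplacian (n : ℕ) :
    (of fun p q : Fin n => weightedLaplacian n p.castSucc q.castSucc).det =
      ∑ f ∈ Fintype.piFinset (fun p : Fin n => univ \ {p.castSucc}),
        (∏ p, X s(p.castSucc, f p)) * (parentMatrix _ f).det := by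
  rw [reducedLaplacian_eq, det_of_sum_smul_rows]
  rfl

section Edges

variable {f g : Fin n → Fin (n + 1)}

def parentEdges (f : Fin n → Fin (n + 1)) : Finset (Sym2 (Fin (n + 1))) :=
  univ.image fun p => s(p.castSucc, f p)

theorem ReachesRoot.ne_castSucc (hf : ReachesRoot f) (p : Fin n) : f p ≠ p.castSucc := by
  obtain ⟨h, hh⟩ := reachesRoot_iff_exists_height.1 hf
  exact fun hp => (hp ▸ hh p).false

theorem ReachesRoot.injective_parentEdge (hf : ReachesRoot f) :
    Function.Injective fun p : Fin n => s(p.castSucc, f p) := by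
  obtain ⟨h, hh⟩ := reachesRoot_iff_exists_height.1 hf
  intro p q hpq
  rcases Sym2.eq_iff.1 hpq with ⟨hpq, -⟩ | ⟨hpq, hqp⟩
  · exact Fin.castSucc_injective n hpq
  · exact (lt_asymm (hqp ▸ hh p) (hpq ▸ hh q)).elim

theorem ReachesRoot.card_parentEdges (hf : ReachesRoot f) : #(parentEdges f) = n := by
  rw [parentEdges, card_image_of_injective _ hf.injective_parentEdge, card_univ,
    Fintype.card_fin]

theorem ReachesRoot.prod_parentEdges {M : Type*} [CommMonoid M] (hf : ReachesRoot f)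
    (φ : Sym2 (Fin (n + 1)) → M) :
    ∏ e ∈ parentEdges f, φ e = ∏ p, φ s(p.castSucc, f p) :=
  prod_image fun _ _ _ _ hpq => hf.injective_parentEdge hpq

theorem ReachesRoot.eq_of_parentEdges_subset (hf : ReachesRoot f)
    (hsub : parentEdges f ⊆ parentEdges g) : f = g := by
  obtain ⟨h, hh⟩ := reachesRoot_iff_exists_height.1 hf
  funext p
  induction hp : h p.castSucc using Nat.strong_induction_on generalizing p with
  | _ m ih =>
    by_contra hne
    -- `{p, f p}` is an edge `{q, g q}` of `g` with `q = f p` and `g q = p`; as `q` is lower,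
    -- `f q = g q = p`, a 2-cycle of `f`.
    obtain ⟨q, -, hq⟩ := mem_image.1 (hsub (mem_image_of_mem _ (mem_univ p)))
    rcases Sym2.eq_iff.1 hq with ⟨hqp, hgq⟩ | ⟨hqf, hgq⟩
    · exact hne (Fin.castSucc_injective n hqp ▸ hgq).symm
    · have hfq : f q = p.castSucc := (ih _ (hp ▸ hqf ▸ hh p) q rfl).trans hgq
      exact lt_asymm (hfq ▸ hh q) (hqf ▸ hh p)

theorem ReachesRoot.adj_fromEdgeSet_parentEdges (hf : ReachesRoot f) (p : Fin n) :
    (fromEdgeSet (parentEdges f : Set (Sym2 (Fin (n + 1))))).Adj p.castSucc (f p) :=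
  (fromEdgeSet_adj _).2 ⟨mem_coe.2 (mem_image_of_mem _ (mem_univ p)), (hf.ne_castSucc p).symm⟩

theorem ReachesRoot.not_isDiag_of_mem_parentEdges (hf : ReachesRoot f) {e : Sym2 (Fin (n + 1))}
    (he : e ∈ parentEdges f) : ¬ e.IsDiag := by
  obtain ⟨p, -, rfl⟩ := mem_image.1 he
  exact fun hd => hf.ne_castSucc p (Sym2.mk_isDiag_iff.1 hd).symm

theorem ReachesRoot.isTree_fromEdgeSet_parentEdges (hf : ReachesRoot f) :
    (fromEdgeSet (parentEdges f : Set (Sym2 (Fin (n + 1))))).IsTree := by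
  obtain ⟨h, hh⟩ := reachesRoot_iff_exists_height.1 hf
  refine (isTree_fromEdgeSet_iff fun _ => hf.not_isDiag_of_mem_parentEdges).2
    ⟨⟨fun u v => ?_⟩, by rw [hf.card_parentEdges, Fintype.card_fin]⟩
  have hreach := reachable_of_forall_exists_adj_lt (Fin.last n) h fun v hv => by
    obtain ⟨p, rfl⟩ := Fin.exists_castSucc_eq.2 hv
    exact ⟨f p, hf.adj_fromEdgeSet_parentEdges p, hh p⟩
  exact (hreach u).trans (hreach v).symm

theorem exists_reachesRoot_parentEdges_eq {E : Finset (Sym2 (Fin (n + 1)))}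
    (hE : ∀ e ∈ E, ¬ e.IsDiag) (hT : (fromEdgeSet (E : Set (Sym2 (Fin (n + 1))))).IsTree) :
    ∃ f, ReachesRoot f ∧ parentEdges f = E := by
  set G := fromEdgeSet (E : Set (Sym2 (Fin (n + 1))))
  have hdesc (p : Fin n) :
      ∃ u, G.Adj p.castSucc u ∧ G.dist u (Fin.last n) < G.dist p.castSucc (Fin.last n) :=
    hT.connected.exists_adj_dist_lt (Fin.castSucc_lt_last p).ne
  choose f hfadj hflt using hdesc
  have hf : ReachesRoot f :=
    reachesRoot_iff_exists_height.2 ⟨fun v => G.dist v (Fin.last n), hflt⟩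
  refine ⟨f, hf, eq_of_subset_of_card_le ?_ ?_⟩
  · intro e he
    obtain ⟨p, -, rfl⟩ := mem_image.1 he
    exact mem_coe.1 ((fromEdgeSet_adj _).1 (hfadj p)).1
  · have := ((isTree_fromEdgeSet_iff hE).1 hT).2
    rw [Fintype.card_fin] at this
    rw [hf.card_parentEdges]
    omega

theorem sum_reachesRoot_parentEdges {M : Type*} [AddCommMonoid M]
    (φ : Finset (Sym2 (Fin (n + 1))) → M) :
    ∑ f ∈ (Fintype.piFinset fun p : Fin n => univ \ {p.castSucc}).filter ReachesRoot,
        φ (parentEdges f) =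
      ∑ E ∈ univ.filter (fun E : Finset (Sym2 (Fin (n + 1))) =>
          (∀ e ∈ E, ¬ e.IsDiag) ∧ (fromEdgeSet (E : Set (Sym2 (Fin (n + 1))))).IsTree), φ E := by
  refine sum_nbij parentEdges (fun f hf => ?_) (fun f hf g _ hfg => ?_) (fun E hE => ?_)
    fun _ _ => rfl
  · have hf := (mem_filter.1 hf).2
    exact mem_filter.2 ⟨mem_univ _, fun _ => hf.not_isDiag_of_mem_parentEdges,
      hf.isTree_fromEdgeSet_parentEdges⟩
  · exact (mem_filter.1 hf).2.eq_of_parentEdges_subset hfg.le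
  · obtain ⟨-, hE, hT⟩ := mem_filter.1 hE
    obtain ⟨f, hf, rfl⟩ := exists_reachesRoot_parentEdges_eq hE hT
    refine ⟨f, mem_filter.2 ⟨Fintype.mem_piFinset.2 fun p => ?_, hf⟩, rfl⟩
    simpa using hf.ne_castSucc p

end Edges

end MatrixTree

/-- **Weighted matrix-tree theorem (Kirchhoff) for the complete graph**: deleting the last
row and column of the weighted Laplacian of `K_{n+1}` yields a matrix `B` with
`det B = ∑_T ∏_{{i,j} ∈ E(T)} X_{ij}`, the sum over all spanning trees `T` of `K_{n+1}`,
i.e. over all edge sets of non-loop edges whose associated graph is connected and acyclic. -/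
theorem weighted_matrix_tree_theorem (n : ℕ) :
    Matrix.det (Matrix.of fun p q : Fin n =>
        weightedLaplacian n p.castSucc q.castSucc) =
      ∑ E ∈ Finset.univ.filter
          (fun E : Finset (Sym2 (Fin (n + 1))) =>
            (∀ e ∈ E, ¬ e.IsDiag) ∧
            (SimpleGraph.fromEdgeSet (E : Set (Sym2 (Fin (n + 1))))).IsTree),
        ∏ e ∈ E, X e := by
  rw [MatrixTree.det_reducedLaplacian, ← MatrixTree.sum_reachesRoot_parentEdges, sum_filter]
  refine sum_congr rfl fun f _ => ?_
  rw [MatrixTree.det_parentMatrix, mul_ite, mul_one, mul_zero]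
  split_ifs with hf
  · exact (hf.prod_parentEdges X).symm
  · rfl
end

section
/- Rank versus border rank of the W-tensor: consider the trilinear polynomial f = x_1 y_1 z_2 + x_1 y_2 z_1 + x_2 y_1 z_1 in the six complex variables x_1, x_2, y_1, y_2, z_1, z_2. (a) f cannot be written as u_1 v_1 w_1 + u_2 v_2 w_2, where each u_ρ is a homogeneous linear form in x_1, x_2, each v_ρ in y_1, y_2, and each w_ρ in z_1, z_2 (so the rank of f is 3). (b) Nevertheless, there is a sequence of polynomials, each of the form u_1 v_1 w_1 + u_2 v_2 w_2 with linear forms as in (a), whose coefficients converge to the coefficients of f (so the border rank of f is at most 2); for instance g_ε := ε^{−1}((x_1 + ε x_2)(y_1 + ε y_2)(z_1 + ε z_2) − x_1 y_1 z_1) satisfies g_ε → f as ε → 0. -/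
open MvPolynomial Filter

/-- A homogeneous linear form in the pair of variables of class `c` (class `0` is the
`x`-variables, class `1` the `y`-variables, class `2` the `z`-variables). -/
def IsLinForm (c : Fin 3) (u : MvPolynomial (Fin 3 × Fin 2) ℂ) : Prop :=
  ∃ a : Fin 2 → ℂ, u = ∑ i, C (a i) * X (c, i)

/-- The W-tensor `f = x₁y₁z₂ + x₁y₂z₁ + x₂y₁z₁`, with `xᵢ = X(0,i)`, `yᵢ = X(1,i)`,
`zᵢ = X(2,i)`. -/
noncomputable def wTensor : MvPolynomial (Fin 3 × Fin 2) ℂ :=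
  X ((0 : Fin 3), (0 : Fin 2)) * X ((1 : Fin 3), (0 : Fin 2)) * X ((2 : Fin 3), (1 : Fin 2)) +
  X ((0 : Fin 3), (0 : Fin 2)) * X ((1 : Fin 3), (1 : Fin 2)) * X ((2 : Fin 3), (0 : Fin 2)) +
  X ((0 : Fin 3), (1 : Fin 2)) * X ((1 : Fin 3), (0 : Fin 2)) * X ((2 : Fin 3), (0 : Fin 2))

/-- The error term of order `ε` in the border-rank approximation. -/
noncomputable def wAuxH1 : MvPolynomial (Fin 3 × Fin 2) ℂ :=
  X ((0 : Fin 3), (0 : Fin 2)) * X ((1 : Fin 3), (1 : Fin 2)) * X ((2 : Fin 3), (1 : Fin 2)) +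
  X ((0 : Fin 3), (1 : Fin 2)) * X ((1 : Fin 3), (0 : Fin 2)) * X ((2 : Fin 3), (1 : Fin 2)) +
  X ((0 : Fin 3), (1 : Fin 2)) * X ((1 : Fin 3), (1 : Fin 2)) * X ((2 : Fin 3), (0 : Fin 2))

/-- The error term of order `ε²` in the border-rank approximation. -/
noncomputable def wAuxH2 : MvPolynomial (Fin 3 × Fin 2) ℂ :=
  X ((0 : Fin 3), (1 : Fin 2)) * X ((1 : Fin 3), (1 : Fin 2)) * X ((2 : Fin 3), (1 : Fin 2))

/-- The point extracting the coefficient of `xᵢyⱼz_k`. -/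
def wAuxPt (i j k : Fin 2) : (Fin 3 × Fin 2) → ℂ := fun p =>
  if (p.1 = 0 ∧ p.2 = i) ∨ (p.1 = 1 ∧ p.2 = j) ∨ (p.1 = 2 ∧ p.2 = k) then 1 else 0

/-- The scalar contradiction at the heart of part (a). -/
lemma wAuxKeyScal (a1 a2 b1 b2 c1 c2 d1 d2 e1 e2 f1 f2 : ℂ)
    (h0 : a1*c1*e1 + a2*c2*e2 = 0)
    (h1 : a1*c1*f1 + a2*c2*f2 = 1)
    (h2 : a1*d1*e1 + a2*d2*e2 = 1)
    (h3 : b1*c1*e1 + b2*c2*e2 = 1)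
    (h4 : a1*d1*f1 + a2*d2*f2 = 0)
    (h5 : b1*c1*f1 + b2*c2*f2 = 0)
    (h6 : b1*d1*e1 + b2*d2*e2 = 0)
    (h7 : b1*d1*f1 + b2*d2*f2 = 0) : False := by
  set m : ℂ := a1*c1*b2*d2 + a2*c2*b1*d1 - a1*d1*b2*c2 - a2*d2*b1*c1 with hm
  have hm1 : e1*e2*m = -1 := by
    have h : e1*e2*m = (a1*c1*e1+a2*c2*e2)*(b1*d1*e1+b2*d2*e2)
        - (a1*d1*e1+a2*d2*e2)*(b1*c1*e1+b2*c2*e2) := by rw [hm]; ring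
    rw [h0, h2, h3, h6] at h; simpa using h
  have hm2 : f1*f2*m = 0 := by
    have h : f1*f2*m = (a1*c1*f1+a2*c2*f2)*(b1*d1*f1+b2*d2*f2)
        - (a1*d1*f1+a2*d2*f2)*(b1*c1*f1+b2*c2*f2) := by rw [hm]; ring
    rw [h1, h4, h5, h7] at h; simpa using h
  have hm3 : (e1*f2 + e2*f1)*m = 0 := by
    have h : (e1*f2 + e2*f1)*m =
        (a1*c1*e1+a2*c2*e2)*(b1*d1*f1+b2*d2*f2) + (a1*c1*f1+a2*c2*f2)*(b1*d1*e1+b2*d2*e2)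
        - (a1*d1*e1+a2*d2*e2)*(b1*c1*f1+b2*c2*f2)
        - (a1*d1*f1+a2*d2*f2)*(b1*c1*e1+b2*c2*e2) := by rw [hm]; ring
    rw [h0, h1, h2, h3, h4, h5, h6, h7] at h; simpa using h
  have hmne : m ≠ 0 := by intro h; rw [h] at hm1; simp at hm1
  have he1 : e1 ≠ 0 := by intro h; rw [h] at hm1; simp at hm1
  have he2 : e2 ≠ 0 := by intro h; rw [h] at hm1; simp at hm1
  have hf : f1*f2 = 0 := by
    rcases mul_eq_zero.mp hm2 with h | h
    · exact h
    · exact absurd h hmne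
  have hef : e1*f2 + e2*f1 = 0 := by
    rcases mul_eq_zero.mp hm3 with h | h
    · exact h
    · exact absurd h hmne
  rcases mul_eq_zero.mp hf with h | h
  · have hf2 : f2 = 0 := by
      rw [h, mul_zero, add_zero] at hef
      exact (mul_eq_zero.mp hef).resolve_left he1
    rw [h, hf2] at h1; simp at h1
  · have hf1 : f1 = 0 := by
      rw [h, mul_zero, zero_add] at hef
      exact (mul_eq_zero.mp hef).resolve_left he2
    rw [h, hf1] at h1; simp at h1

/-- **Rank versus border rank of the W-tensor**:
(a) `f = x₁y₁z₂ + x₁y₂z₁ + x₂y₁z₁` cannot be written as `u₁v₁w₁ + u₂v₂w₂` with linear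
forms `u_ρ` in the `x`-variables, `v_ρ` in the `y`-variables, `w_ρ` in the `z`-variables
(so the rank of `f` is `3`); but
(b) there is a sequence of polynomials of that very form whose coefficients converge to
the coefficients of `f` (so the border rank of `f` is at most `2`). -/
theorem wTensor_rank_three_border_rank_two :
    (¬ ∃ u v w : Fin 2 → MvPolynomial (Fin 3 × Fin 2) ℂ,
      (∀ ρ, IsLinForm 0 (u ρ)) ∧ (∀ ρ, IsLinForm 1 (v ρ)) ∧ (∀ ρ, IsLinForm 2 (w ρ)) ∧
      wTensor = ∑ ρ, u ρ * v ρ * w ρ) ∧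
    (∃ g : ℕ → MvPolynomial (Fin 3 × Fin 2) ℂ,
      (∀ s, ∃ u v w : Fin 2 → MvPolynomial (Fin 3 × Fin 2) ℂ,
        (∀ ρ, IsLinForm 0 (u ρ)) ∧ (∀ ρ, IsLinForm 1 (v ρ)) ∧ (∀ ρ, IsLinForm 2 (w ρ)) ∧
        g s = ∑ ρ, u ρ * v ρ * w ρ) ∧
      ∀ d : (Fin 3 × Fin 2) →₀ ℕ,
        Tendsto (fun s => (g s).coeff d) atTop (nhds (wTensor.coeff d))) := by
  constructor
  · rintro ⟨u, v, w, hu, hv, hw, heq⟩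
    obtain ⟨a1, ha1⟩ := hu 0
    obtain ⟨a2, ha2⟩ := hu 1
    obtain ⟨c1, hc1⟩ := hv 0
    obtain ⟨c2, hc2⟩ := hv 1
    obtain ⟨e1, he1⟩ := hw 0
    obtain ⟨e2, he2⟩ := hw 1
    have key : ∀ i j k : Fin 2, eval (wAuxPt i j k) wTensor =
        a1 i * c1 j * e1 k + a2 i * c2 j * e2 k := by
      intro i j k
      rw [heq]
      simp only [Fin.sum_univ_two, ha1, ha2, hc1, hc2, he1, he2, eval_add, eval_mul, eval_C,
        eval_X, wAuxPt]
      norm_num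
      fin_cases i <;> fin_cases j <;> fin_cases k <;> norm_num [Fin.ext_iff]
    have h000 := key 0 0 0
    have h001 := key 0 0 1
    have h010 := key 0 1 0
    have h100 := key 1 0 0
    have h011 := key 0 1 1
    have h101 := key 1 0 1
    have h110 := key 1 1 0
    have h111 := key 1 1 1
    simp only [wTensor, wAuxPt, eval_add, eval_mul, eval_X]
      at h000 h001 h010 h100 h011 h101 h110 h111
    norm_num [Fin.ext_iff] at h000 h001 h010 h100 h011 h101 h110 h111
    exact wAuxKeyScal (a1 0) (a2 0) (a1 1) (a2 1) (c1 0) (c2 0) (c1 1) (c2 1)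
      (e1 0) (e2 0) (e1 1) (e2 1) h000.symm h001.symm h010.symm h100.symm
      h011.symm h101.symm h110.symm h111.symm
  · refine ⟨fun s => wTensor + C (((s : ℂ) + 1)⁻¹) * wAuxH1
      + C (((s : ℂ) + 1)⁻¹) * C (((s : ℂ) + 1)⁻¹) * wAuxH2, ?_, ?_⟩
    · intro s
      set n : ℂ := (s : ℂ) + 1 with hn
      have hn0 : n ≠ 0 := by
        rw [hn]
        exact Nat.cast_add_one_ne_zero s
      have hne : n * n⁻¹ = 1 := mul_inv_cancel₀ hn0
      refine ⟨![C n * X (0,0) + X (0,1), -(C n * X (0,0))],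
              ![X (1,0) + C n⁻¹ * X (1,1), X (1,0)],
              ![X (2,0) + C n⁻¹ * X (2,1), X (2,0)], ?_, ?_, ?_, ?_⟩
      · intro ρ
        fin_cases ρ
        · exact ⟨![n, 1], by simp [Fin.sum_univ_two]⟩
        · exact ⟨![-n, 0], by simp [Fin.sum_univ_two, map_neg]⟩
      · intro ρ
        fin_cases ρ
        · exact ⟨![1, n⁻¹], by simp [Fin.sum_univ_two]⟩
        · exact ⟨![1, 0], by simp [Fin.sum_univ_two]⟩
      · intro ρ
        fin_cases ρ
        · exact ⟨![1, n⁻¹], by simp [Fin.sum_univ_two]⟩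
        · exact ⟨![1, 0], by simp [Fin.sum_univ_two]⟩
      · have hC : (C n * C n⁻¹ : MvPolynomial (Fin 3 × Fin 2) ℂ) = 1 := by
          rw [← C_mul, hne, C_1]
        simp only [Fin.sum_univ_two, Matrix.cons_val_zero, Matrix.cons_val_one, Matrix.head_cons]
        rw [wTensor, wAuxH1, wAuxH2]
        linear_combination (-(X ((0:Fin 3),(0:Fin 2)) * X ((1:Fin 3),(0:Fin 2)) * X ((2:Fin 3),(1:Fin 2)) +
          X ((0:Fin 3),(0:Fin 2)) * X ((1:Fin 3),(1:Fin 2)) * X ((2:Fin 3),(0:Fin 2)) +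
          C n⁻¹ * (X ((0:Fin 3),(0:Fin 2)) * X ((1:Fin 3),(1:Fin 2)) * X ((2:Fin 3),(1:Fin 2))))) * hC
    · intro d
      have hinv : Tendsto (fun s : ℕ => ((s : ℂ) + 1)⁻¹) atTop (nhds 0) := by
        rw [tendsto_zero_iff_norm_tendsto_zero]
        have : (fun s : ℕ => ‖((s : ℂ) + 1)⁻¹‖) = fun s : ℕ => ((s : ℝ) + 1)⁻¹ := by
          funext s
          rw [norm_inv]
          congr 1
          have : ((s : ℂ) + 1) = ((s + 1 : ℝ) : ℂ) := by push_cast; ring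
          rw [this, Complex.norm_real, Real.norm_of_nonneg (by positivity)]
        rw [this]
        exact tendsto_inv_atTop_zero.comp
          (tendsto_atTop_add_const_right _ 1 tendsto_natCast_atTop_atTop)
      have h : ∀ s : ℕ,
          (wTensor + C (((s : ℂ) + 1)⁻¹) * wAuxH1
            + C (((s : ℂ) + 1)⁻¹) * C (((s : ℂ) + 1)⁻¹) * wAuxH2).coeff d
          = wTensor.coeff d + ((s : ℂ) + 1)⁻¹ * wAuxH1.coeff d
            + ((s : ℂ) + 1)⁻¹ * (((s : ℂ) + 1)⁻¹ * wAuxH2.coeff d) := by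
        intro s; simp [coeff_add, coeff_C_mul, mul_assoc]
      simp only [h]
      have t1 : Tendsto (fun s : ℕ => ((s : ℂ) + 1)⁻¹ * wAuxH1.coeff d) atTop (nhds 0) := by
        simpa using hinv.mul (tendsto_const_nhds (x := wAuxH1.coeff d))
      have t2 : Tendsto (fun s : ℕ => ((s : ℂ) + 1)⁻¹ * (((s : ℂ) + 1)⁻¹ * wAuxH2.coeff d)) atTop
          (nhds 0) := by
        simpa using hinv.mul (hinv.mul (tendsto_const_nhds (x := wAuxH2.coeff d)))
      have t0 : Tendsto (fun _ : ℕ => wTensor.coeff d) atTop (nhds (wTensor.coeff d)) :=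
        tendsto_const_nhds
      simpa using (t0.add t1).add t2
end
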